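/- arXiv:2311.06652 — 5 statements merged into one kernel-verified Lean document; each statement's English description precedes it below -/
import Mathlib

section
/- With the notation of the sectioning of a strictly log-convex compact set D ⊂ (0,∞)^2 containing (1,1), and with x** , y** the critical points satisfying x*_P ≤ x* ≤ 1 ≤ x** ≤ x**_P and y*_P ≤ y* ≤ 1 ≤ y** ≤ y**_P: the simultaneous inequalities x** < X_1(y**) and y** < Y_1(x**) are impossible. -/
open scoped ENNReal

/-- In the setting of the sectioning of a strictly log-convex compact set `D ⊂ (0,∞)²`
containing `(1,1)`, with log-convex sets `D₁`, `D₂` such that `D∩D₁`, `D∩D₂` have nonempty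
interior and `(1,1) ∈ D∩D₁∩D₂`, and with critical points satisfying
`x*_P ≤ x* ≤ 1 ≤ x** ≤ x**_P` and `y*_P ≤ y* ≤ 1 ≤ y** ≤ y**_P`:
the simultaneous inequalities `x** < X₁(y**)` and `y** < Y₁(x**)` are impossible. -/
theorem case_i_impossible
    (P : ℝ × ℝ → ℝ≥0∞) (D D₁ D₂ : Set (ℝ × ℝ))
    (hD : D = {q : ℝ × ℝ | 0 < q.1 ∧ 0 < q.2 ∧ P q ≤ 1})
    (hconv : ∀ a c : ℝ × ℝ, a ≠ c → ∀ t : ℝ, 0 < t → t < 1 →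
      P (Real.exp (t * a.1 + (1 - t) * c.1), Real.exp (t * a.2 + (1 - t) * c.2)) <
        ENNReal.ofReal t * P (Real.exp a.1, Real.exp a.2) +
          ENNReal.ofReal (1 - t) * P (Real.exp c.1, Real.exp c.2))
    (hcpt : IsCompact {a : ℝ × ℝ | P (Real.exp a.1, Real.exp a.2) ≤ 1})
    (hint : (interior {a : ℝ × ℝ | P (Real.exp a.1, Real.exp a.2) ≤ 1}).Nonempty)
    (hfin : ∃ U : Set (ℝ × ℝ), IsOpen U ∧
      {a : ℝ × ℝ | P (Real.exp a.1, Real.exp a.2) ≤ 1} ⊆ U ∧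
      ∀ a ∈ U, P (Real.exp a.1, Real.exp a.2) ≠ ⊤)
    (hD₁conv : Convex ℝ {a : ℝ × ℝ | (Real.exp a.1, Real.exp a.2) ∈ D₁})
    (hD₂conv : Convex ℝ {a : ℝ × ℝ | (Real.exp a.1, Real.exp a.2) ∈ D₂})
    (h11 : ((1 : ℝ), (1 : ℝ)) ∈ D ∩ D₁ ∩ D₂)
    (hintDD₁ : (interior (D ∩ D₁)).Nonempty)
    (hintDD₂ : (interior (D ∩ D₂)).Nonempty)
    (xsP xssP ysP yssP : ℝ) (Y₁ Y₂ X₁ X₂ : ℝ → ℝ)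
    (hxproj : {x : ℝ | ∃ y : ℝ, (x, y) ∈ D} = Set.Icc xsP xssP)
    (hY : ∀ x ∈ Set.Icc xsP xssP,
      Y₁ x ≤ Y₂ x ∧ {y : ℝ | (x, y) ∈ D} = Set.Icc (Y₁ x) (Y₂ x))
    (hyproj : {y : ℝ | ∃ x : ℝ, (x, y) ∈ D} = Set.Icc ysP yssP)
    (hX : ∀ y ∈ Set.Icc ysP yssP,
      X₁ y ≤ X₂ y ∧ {x : ℝ | (x, y) ∈ D} = Set.Icc (X₁ y) (X₂ y))
    (xst xsst yst ysst : ℝ)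
    (hx1proj : {x : ℝ | ∃ y : ℝ, (x, y) ∈ D ∩ D₁} = Set.Icc xst xsst)
    (hy2proj : {y : ℝ | ∃ x : ℝ, (x, y) ∈ D ∩ D₂} = Set.Icc yst ysst)
    (hchainx : xsP ≤ xst ∧ xst ≤ 1 ∧ 1 ≤ xsst ∧ xsst ≤ xssP)
    (hchainy : ysP ≤ yst ∧ yst ≤ 1 ∧ 1 ≤ ysst ∧ ysst ≤ yssP) :
    ¬(xsst < X₁ ysst ∧ ysst < Y₁ xsst) := by
  rintro ⟨hXlt, hYlt⟩
  obtain ⟨⟨h1D, h1D₁⟩, h1D₂⟩ := h11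
  have h1ysst : (1 : ℝ) ≤ ysst := hchainy.2.2.1
  have h1xsst : (1 : ℝ) ≤ xsst := hchainx.2.2.1
  have hP11 : P (1, 1) ≤ 1 := by rw [hD] at h1D; exact h1D.2.2
  -- obtain the point B = (xB, ysst) ∈ D ∩ D₂ ⊆ D
  have hysstmem : ysst ∈ {y : ℝ | ∃ x : ℝ, (x, y) ∈ D ∩ D₂} := by
    rw [hy2proj]; exact ⟨le_trans hchainy.2.1 h1ysst, le_refl _⟩
  obtain ⟨xB, hBmem⟩ := hysstmem
  have hBD : (xB, ysst) ∈ D := hBmem.1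
  have hysstP : ysst ∈ Set.Icc ysP yssP := by
    rw [← hyproj]; exact ⟨xB, hBD⟩
  have hxBIcc : xB ∈ Set.Icc (X₁ ysst) (X₂ ysst) := by
    rw [← (hX ysst hysstP).2]; exact hBD
  have hxsstxB : xsst < xB := lt_of_lt_of_le hXlt hxBIcc.1
  -- dispose of the case xsst = 1
  rcases eq_or_lt_of_le h1xsst with h1 | h1
  · have h1P : xsst ∈ Set.Icc xsP xssP := by
      rw [← hxproj]; exact ⟨1, by rw [← h1]; exact h1D⟩
    have : (1 : ℝ) ∈ Set.Icc (Y₁ xsst) (Y₂ xsst) := by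
      rw [← (hY xsst h1P).2, ← h1]; exact h1D
    linarith [this.1]
  -- main case : 1 < xsst
  have hxsstpos : (0 : ℝ) < xsst := by linarith
  have hxBpos : (0 : ℝ) < xB := by linarith
  have hysstpos : (0 : ℝ) < ysst := by linarith
  have hlogxsst : (0 : ℝ) < Real.log xsst := Real.log_pos h1
  have hloglt : Real.log xsst < Real.log xB := Real.log_lt_log hxsstpos hxsstxB
  set t : ℝ := Real.log xsst / Real.log xB with ht
  have ht0 : 0 < t := div_pos hlogxsst (by linarith)
  have ht1 : t < 1 := (div_lt_one (by linarith)).mpr hloglt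
  have hne : ((0 : ℝ), (0 : ℝ)) ≠ (Real.log xB, Real.log ysst) := by
    intro h
    have : (0 : ℝ) = Real.log xB := congrArg Prod.fst h
    linarith
  have hkey := hconv (0, 0) (Real.log xB, Real.log ysst) hne (1 - t)
    (by linarith) (by linarith)
  simp only [Real.exp_zero] at hkey
  have harg1 : (1 - t) * (0 : ℝ) + (1 - (1 - t)) * Real.log xB = Real.log xsst := by
    have hne' : Real.log xB ≠ 0 := by linarith
    have : t * Real.log xB = Real.log xsst := by
      rw [ht, div_mul_cancel₀ _ hne']
    linarith
  have hPxB : P (xB, ysst) ≤ 1 := by rw [hD] at hBD; exact hBD.2.2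
  rw [harg1, Real.exp_log hxsstpos, Real.exp_log hxBpos, Real.exp_log hysstpos] at hkey
  have hRHS : ENNReal.ofReal (1 - t) * P (1, 1) +
      ENNReal.ofReal (1 - (1 - t)) * P (xB, ysst) ≤ 1 := by
    calc ENNReal.ofReal (1 - t) * P (1, 1) +
        ENNReal.ofReal (1 - (1 - t)) * P (xB, ysst)
        ≤ ENNReal.ofReal (1 - t) * 1 + ENNReal.ofReal (1 - (1 - t)) * 1 :=
          add_le_add (mul_le_mul_right hP11 _) (mul_le_mul_right hPxB _)
      _ = ENNReal.ofReal (1 - t) + ENNReal.ofReal (1 - (1 - t)) := by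
          rw [mul_one, mul_one]
      _ = ENNReal.ofReal ((1 - t) + (1 - (1 - t))) := by
          rw [ENNReal.ofReal_add (by linarith) (by linarith)]
      _ = 1 := by norm_num
  have hPC : P (xsst, Real.exp ((1 - t) * 0 + (1 - (1 - t)) * Real.log ysst)) ≤ 1 :=
    le_of_lt (lt_of_lt_of_le hkey hRHS)
  set yC : ℝ := Real.exp ((1 - t) * 0 + (1 - (1 - t)) * Real.log ysst) with hyC
  have hCD : (xsst, yC) ∈ D := by
    rw [hD]; exact ⟨hxsstpos, Real.exp_pos _, hPC⟩
  have hxsstP : xsst ∈ Set.Icc xsP xssP := by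
    rw [← hxproj]; exact ⟨yC, hCD⟩
  have hCIcc : yC ∈ Set.Icc (Y₁ xsst) (Y₂ xsst) := by
    rw [← (hY xsst hxsstP).2]; exact hCD
  have hyCle : yC ≤ ysst := by
    have hlogy : (0 : ℝ) ≤ Real.log ysst := Real.log_nonneg h1ysst
    have harg : (1 - t) * 0 + (1 - (1 - t)) * Real.log ysst ≤ Real.log ysst := by
      nlinarith
    calc yC ≤ Real.exp (Real.log ysst) := Real.exp_le_exp.mpr harg
      _ = ysst := Real.exp_log hysstpos
  linarith [hCIcc.1]
end

section
/- Let μ be a probability measure on Z^2 whose associated homogeneous random walk (Z(n)) on Z_+^2 (with jump law μ in the interior, μ_1 on the horizontal axis, μ_2 on the vertical axis, μ_0 at the origin) satisfies: (x_1,y_1) lies in the interior of D∩D_1 and (x_2,y_2) lies in the interior of D∩D_2, with x_1 > x_2 and y_1 < y_2, where D = {P ≤ 1}, D_1 = {φ_1 ≤ 1}, D_2 = {φ_2 ≤ 1} are the level sets of the generating functions of μ, μ_1, μ_2. Then the function f(j_1,j_2) = x_1^{j_1} y_1^{j_2} + x_2^{j_1} y_2^{j_2} satisfies: there exist θ ∈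 (0,1) and a finite set E ⊂ Z_+^2 such that E_j[f(Z(1))] ≤ θ f(j) for all j ∈ Z_+^2 \ E. -/
open scoped ENNReal

/-- Generating function `∑_k μ(k) x^{k₁} y^{k₂}` of a jump measure on `ℤ²`. -/
noncomputable def genE (ν : ℤ × ℤ → ℝ≥0∞) (x y : ℝ≥0∞) : ℝ≥0∞ :=
  ∑' k : ℤ × ℤ, ν k * x ^ k.1 * y ^ k.2

/-- One-step kernel of the partially homogeneous random walk in the quadrant `ℤ₊²`:
jump law `μ` in the interior, `μ₁` on the horizontal axis, `μ₂` on the vertical axis,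
`μ₀` at the origin. -/
noncomputable def rwStep (μ μ₀ μ₁ μ₂ : ℤ × ℤ → ℝ≥0∞) (j k : ℕ × ℕ) : ℝ≥0∞ :=
  if j = (0, 0) then μ₀ ((k.1 : ℤ) - (j.1 : ℤ), (k.2 : ℤ) - (j.2 : ℤ))
  else if j.2 = 0 then μ₁ ((k.1 : ℤ) - (j.1 : ℤ), (k.2 : ℤ) - (j.2 : ℤ))
  else if j.1 = 0 then μ₂ ((k.1 : ℤ) - (j.1 : ℤ), (k.2 : ℤ) - (j.2 : ℤ))
  else μ ((k.1 : ℤ) - (j.1 : ℤ), (k.2 : ℤ) - (j.2 : ℤ))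

/-- Key bound: the shifted sum over the quadrant is controlled by the generating function. -/
lemma shiftSum_le (ν : ℤ × ℤ → ℝ≥0∞) (x y : ℝ≥0∞)
    (hx0 : x ≠ 0) (hxt : x ≠ ⊤) (hy0 : y ≠ 0) (hyt : y ≠ ⊤) (j : ℕ × ℕ) :
    (∑' k : ℕ × ℕ, ν ((k.1 : ℤ) - j.1, (k.2 : ℤ) - j.2) * (x ^ k.1 * y ^ k.2)) ≤
      x ^ j.1 * y ^ j.2 * genE ν x y := by
  set e : ℕ × ℕ → ℤ × ℤ := fun k => ((k.1 : ℤ) - j.1, (k.2 : ℤ) - j.2) with he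
  have hinj : Function.Injective e := by
    intro a b hab
    simp only [he, Prod.mk.injEq, sub_left_inj, Nat.cast_inj] at hab
    exact Prod.ext hab.1 hab.2
  have key : ∀ k : ℕ × ℕ, ν (e k) * (x ^ k.1 * y ^ k.2) =
      x ^ j.1 * y ^ j.2 * (ν (e k) * x ^ (e k).1 * y ^ (e k).2) := by
    intro k
    have hx' : (x : ℝ≥0∞) ^ (k.1 : ℕ) = x ^ ((k.1 : ℤ) - j.1) * x ^ (j.1 : ℤ) := by
      rw [← ENNReal.zpow_add hx0 hxt, sub_add_cancel, zpow_natCast]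
    have hy' : (y : ℝ≥0∞) ^ (k.2 : ℕ) = y ^ ((k.2 : ℤ) - j.2) * y ^ (j.2 : ℤ) := by
      rw [← ENNReal.zpow_add hy0 hyt, sub_add_cancel, zpow_natCast]
    rw [hx', hy']
    simp only [he]
    rw [show ((j.1 : ℤ)) = ((j.1 : ℕ) : ℤ) from rfl, zpow_natCast, zpow_natCast]
    ring
  calc (∑' k : ℕ × ℕ, ν (e k) * (x ^ k.1 * y ^ k.2))
      = ∑' k : ℕ × ℕ, x ^ j.1 * y ^ j.2 * (ν (e k) * x ^ (e k).1 * y ^ (e k).2) :=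
        tsum_congr key
    _ = x ^ j.1 * y ^ j.2 * ∑' k : ℕ × ℕ, (ν (e k) * x ^ (e k).1 * y ^ (e k).2) :=
        ENNReal.tsum_mul_left
    _ ≤ x ^ j.1 * y ^ j.2 * genE ν x y :=
        mul_le_mul_right (ENNReal.tsum_comp_le_tsum_of_injective hinj
          (fun m => ν m * x ^ m.1 * y ^ m.2)) _

/-- If `(x₁,y₁)` lies in the interior of `D ∩ D₁` and `(x₂,y₂)` in the interior of `D ∩ D₂`
with `x₁ > x₂`, `y₁ < y₂`, then `f(j) = x₁^{j₁} y₁^{j₂} + x₂^{j₁} y₂^{j₂}` is a Lyapunov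
function: `E_j[f(Z(1))] ≤ θ f(j)` off a finite set, for some `θ < 1`. -/
theorem lyapunov_drift_for_quadrant_walk
    (μ μ₀ μ₁ μ₂ : ℤ × ℤ → ℝ≥0∞)
    (hμ : ∑' k : ℤ × ℤ, μ k = 1)
    (hμ₀ : ∑' k : ℤ × ℤ, μ₀ k ≤ 1) (hμ₁ : ∑' k : ℤ × ℤ, μ₁ k ≤ 1)
    (hμ₂ : ∑' k : ℤ × ℤ, μ₂ k ≤ 1)
    (hμsupp : ∀ k : ℤ × ℤ, k.1 < -1 ∨ k.2 < -1 → μ k = 0)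
    (hμ₁supp : ∀ k : ℤ × ℤ, k.1 < -1 ∨ k.2 < 0 → μ₁ k = 0)
    (hμ₂supp : ∀ k : ℤ × ℤ, k.1 < 0 ∨ k.2 < -1 → μ₂ k = 0)
    (hμ₀supp : ∀ k : ℤ × ℤ, k.1 < 0 ∨ k.2 < 0 → μ₀ k = 0)
    (x₁ y₁ x₂ y₂ : ℝ≥0∞)
    (hx₁ : 0 < x₁) (hx₁' : x₁ ≠ ⊤) (hy₁ : 0 < y₁) (hy₁' : y₁ ≠ ⊤)
    (hx₂ : 0 < x₂) (hx₂' : x₂ ≠ ⊤) (hy₂ : 0 < y₂) (hy₂' : y₂ ≠ ⊤)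
    (hord₁ : x₂ < x₁) (hord₂ : y₁ < y₂)
    (hint₁ : genE μ x₁ y₁ < 1) (hint₁' : genE μ₁ x₁ y₁ < 1)
    (hint₂ : genE μ x₂ y₂ < 1) (hint₂' : genE μ₂ x₂ y₂ < 1)
    (hfin₁ : genE μ₂ x₁ y₁ ≠ ⊤) (hfin₂ : genE μ₁ x₂ y₂ ≠ ⊤) :
    ∃ θ : ℝ≥0∞, 0 < θ ∧ θ < 1 ∧ ∃ E : Finset (ℕ × ℕ),
      ∀ j : ℕ × ℕ, j ∉ E →
        (∑' k : ℕ × ℕ, rwStep μ μ₀ μ₁ μ₂ j k *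
            (x₁ ^ k.1 * y₁ ^ k.2 + x₂ ^ k.1 * y₂ ^ k.2)) ≤
          θ * (x₁ ^ j.1 * y₁ ^ j.2 + x₂ ^ j.1 * y₂ ^ j.2) := by
  -- the contraction factor away from the axes
  set θ₀ : ℝ≥0∞ := max (max (genE μ x₁ y₁) (genE μ x₂ y₂))
      (max (genE μ₁ x₁ y₁) (genE μ₂ x₂ y₂)) with hθ₀
  have hθ₀1 : θ₀ < 1 := by
    simp only [hθ₀, max_lt_iff]
    exact ⟨⟨hint₁, hint₂⟩, ⟨hint₁', hint₂'⟩⟩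
  have hθ₀t : θ₀ ≠ ⊤ := (hθ₀1.trans ENNReal.one_lt_top).ne
  set δ : ℝ≥0∞ := (1 - θ₀) / 2 with hδ
  have hsubpos : (0 : ℝ≥0∞) < 1 - θ₀ := tsub_pos_of_lt hθ₀1
  have hδpos : 0 < δ := ENNReal.half_pos hsubpos.ne'
  have hδlt : δ < 1 - θ₀ :=
    ENNReal.half_lt_self hsubpos.ne' (ne_top_of_le_ne_top ENNReal.one_ne_top tsub_le_self)
  set θ : ℝ≥0∞ := θ₀ + δ with hθdef
  have hθpos : 0 < θ := hδpos.trans_le le_add_self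
  have hθlt1 : θ < 1 := by
    calc θ₀ + δ < θ₀ + (1 - θ₀) := ENNReal.add_lt_add_left hθ₀t hδlt
      _ = 1 := add_tsub_cancel_of_le hθ₀1.le
  -- ratios
  set r₁ : ℝ≥0∞ := x₂ / x₁ with hr₁def
  set r₂ : ℝ≥0∞ := y₁ / y₂ with hr₂def
  have hr₁ : r₁ < 1 := by
    rw [hr₁def, ENNReal.div_lt_iff (Or.inl hx₁.ne') (Or.inl hx₁'), one_mul]
    exact hord₁
  have hr₂ : r₂ < 1 := by
    rw [hr₂def, ENNReal.div_lt_iff (Or.inl hy₂.ne') (Or.inl hy₂'), one_mul]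
    exact hord₂
  have hx₂eq : ∀ n : ℕ, x₂ ^ n = r₁ ^ n * x₁ ^ n := by
    intro n
    rw [← mul_pow, hr₁def, ENNReal.div_mul_cancel hx₁.ne' hx₁']
  have hy₁eq : ∀ n : ℕ, y₁ ^ n = r₂ ^ n * y₂ ^ n := by
    intro n
    rw [← mul_pow, hr₂def, ENNReal.div_mul_cancel hy₂.ne' hy₂']
  -- eventual smallness of the cross terms
  have h1 : ∀ᶠ n : ℕ in Filter.atTop, genE μ₁ x₂ y₂ * r₁ ^ n < δ := by
    have := (ENNReal.Tendsto.const_mul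
      (ENNReal.tendsto_pow_atTop_nhds_zero_of_lt_one hr₁) (Or.inr hfin₂))
    rw [mul_zero] at this
    exact this.eventually_lt_const hδpos
  have h2 : ∀ᶠ n : ℕ in Filter.atTop, genE μ₂ x₁ y₁ * r₂ ^ n < δ := by
    have := (ENNReal.Tendsto.const_mul
      (ENNReal.tendsto_pow_atTop_nhds_zero_of_lt_one hr₂) (Or.inr hfin₁))
    rw [mul_zero] at this
    exact this.eventually_lt_const hδpos
  obtain ⟨N, hN⟩ := Filter.eventually_atTop.1 (h1.and h2)
  refine ⟨θ, hθpos, hθlt1, Finset.range (N + 1) ×ˢ Finset.range (N + 1), ?_⟩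
  intro j hj
  rw [Finset.mem_product, Finset.mem_range, Finset.mem_range, not_and_or, not_lt, not_lt] at hj
  -- bounds on the individual generating function values
  have hg₁ : genE μ x₁ y₁ ≤ θ₀ := le_max_of_le_left (le_max_left _ _)
  have hg₂ : genE μ x₂ y₂ ≤ θ₀ := le_max_of_le_left (le_max_right _ _)
  have ha₁ : genE μ₁ x₁ y₁ ≤ θ₀ := le_max_of_le_right (le_max_left _ _)
  have hb₂ : genE μ₂ x₂ y₂ ≤ θ₀ := le_max_of_le_right (le_max_right _ _)
  by_cases hj2 : j.2 = 0
  · by_cases hj1 : j.1 = 0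
    · -- origin: impossible, it is in E
      exfalso
      rcases hj with h | h
      · rw [hj1] at h; omega
      · rw [hj2] at h; omega
    · -- horizontal axis, j.1 > N : kernel μ₁
      have hne : j ≠ (0, 0) := by
        intro h; exact hj1 (by rw [h])
      have hjN : N + 1 ≤ j.1 := by
        rcases hj with h | h
        · exact h
        · rw [hj2] at h; omega
      have hcross : genE μ₁ x₂ y₂ * x₂ ^ j.1 ≤ δ * x₁ ^ j.1 := by
        rw [hx₂eq j.1, ← mul_assoc]
        exact mul_le_mul_left ((hN j.1 (by omega)).1.le) _
      calc (∑' k : ℕ × ℕ, rwStep μ μ₀ μ₁ μ₂ j k *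
              (x₁ ^ k.1 * y₁ ^ k.2 + x₂ ^ k.1 * y₂ ^ k.2))
          = (∑' k : ℕ × ℕ, μ₁ ((k.1 : ℤ) - j.1, (k.2 : ℤ) - j.2) * (x₁ ^ k.1 * y₁ ^ k.2)) +
            (∑' k : ℕ × ℕ, μ₁ ((k.1 : ℤ) - j.1, (k.2 : ℤ) - j.2) * (x₂ ^ k.1 * y₂ ^ k.2)) := by
            rw [← ENNReal.tsum_add]
            refine tsum_congr fun k => ?_
            simp only [rwStep, if_neg hne, if_pos hj2, mul_add]
        _ ≤ x₁ ^ j.1 * y₁ ^ j.2 * genE μ₁ x₁ y₁ + x₂ ^ j.1 * y₂ ^ j.2 * genE μ₁ x₂ y₂ :=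
            add_le_add (shiftSum_le μ₁ x₁ y₁ hx₁.ne' hx₁' hy₁.ne' hy₁' j)
              (shiftSum_le μ₁ x₂ y₂ hx₂.ne' hx₂' hy₂.ne' hy₂' j)
        _ = genE μ₁ x₁ y₁ * x₁ ^ j.1 + genE μ₁ x₂ y₂ * x₂ ^ j.1 := by
            rw [hj2]; simp only [pow_zero, mul_one]; ring
        _ ≤ θ₀ * x₁ ^ j.1 + δ * x₁ ^ j.1 :=
            add_le_add (mul_le_mul_left ha₁ _) hcross
        _ = θ * x₁ ^ j.1 := (add_mul θ₀ δ _).symm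
        _ ≤ θ * (x₁ ^ j.1 * y₁ ^ j.2 + x₂ ^ j.1 * y₂ ^ j.2) := by
            refine mul_le_mul_right ?_ _
            rw [hj2]; simp only [pow_zero, mul_one]; exact le_self_add
  · by_cases hj1 : j.1 = 0
    · -- vertical axis, j.2 > N : kernel μ₂
      have hne : j ≠ (0, 0) := by
        intro h; exact hj2 (by rw [h])
      have hjN : N + 1 ≤ j.2 := by
        rcases hj with h | h
        · rw [hj1] at h; omega
        · exact h
      have hcross : genE μ₂ x₁ y₁ * y₁ ^ j.2 ≤ δ * y₂ ^ j.2 := by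
        rw [hy₁eq j.2, ← mul_assoc]
        exact mul_le_mul_left ((hN j.2 (by omega)).2.le) _
      calc (∑' k : ℕ × ℕ, rwStep μ μ₀ μ₁ μ₂ j k *
              (x₁ ^ k.1 * y₁ ^ k.2 + x₂ ^ k.1 * y₂ ^ k.2))
          = (∑' k : ℕ × ℕ, μ₂ ((k.1 : ℤ) - j.1, (k.2 : ℤ) - j.2) * (x₁ ^ k.1 * y₁ ^ k.2)) +
            (∑' k : ℕ × ℕ, μ₂ ((k.1 : ℤ) - j.1, (k.2 : ℤ) - j.2) * (x₂ ^ k.1 * y₂ ^ k.2)) := by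
            rw [← ENNReal.tsum_add]
            refine tsum_congr fun k => ?_
            simp only [rwStep, if_neg hne, if_neg hj2, if_pos hj1, mul_add]
        _ ≤ x₁ ^ j.1 * y₁ ^ j.2 * genE μ₂ x₁ y₁ + x₂ ^ j.1 * y₂ ^ j.2 * genE μ₂ x₂ y₂ :=
            add_le_add (shiftSum_le μ₂ x₁ y₁ hx₁.ne' hx₁' hy₁.ne' hy₁' j)
              (shiftSum_le μ₂ x₂ y₂ hx₂.ne' hx₂' hy₂.ne' hy₂' j)
        _ = genE μ₂ x₁ y₁ * y₁ ^ j.2 + genE μ₂ x₂ y₂ * y₂ ^ j.2 := by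
            rw [hj1]; simp only [pow_zero, one_mul]; ring
        _ ≤ δ * y₂ ^ j.2 + θ₀ * y₂ ^ j.2 :=
            add_le_add hcross (mul_le_mul_left hb₂ _)
        _ = θ * y₂ ^ j.2 := by rw [hθdef, add_mul, add_comm]
        _ ≤ θ * (x₁ ^ j.1 * y₁ ^ j.2 + x₂ ^ j.1 * y₂ ^ j.2) := by
            refine mul_le_mul_right ?_ _
            rw [hj1]; simp only [pow_zero, one_mul]; exact le_add_self
    · -- interior: kernel μ
      have hne : j ≠ (0, 0) := by
        intro h; exact hj2 (by rw [h])
      calc (∑' k : ℕ × ℕ, rwStep μ μ₀ μ₁ μ₂ j k *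
              (x₁ ^ k.1 * y₁ ^ k.2 + x₂ ^ k.1 * y₂ ^ k.2))
          = (∑' k : ℕ × ℕ, μ ((k.1 : ℤ) - j.1, (k.2 : ℤ) - j.2) * (x₁ ^ k.1 * y₁ ^ k.2)) +
            (∑' k : ℕ × ℕ, μ ((k.1 : ℤ) - j.1, (k.2 : ℤ) - j.2) * (x₂ ^ k.1 * y₂ ^ k.2)) := by
            rw [← ENNReal.tsum_add]
            refine tsum_congr fun k => ?_
            simp only [rwStep, if_neg hne, if_neg hj2, if_neg hj1, mul_add]
        _ ≤ x₁ ^ j.1 * y₁ ^ j.2 * genE μ x₁ y₁ + x₂ ^ j.1 * y₂ ^ j.2 * genE μ x₂ y₂ :=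
            add_le_add (shiftSum_le μ x₁ y₁ hx₁.ne' hx₁' hy₁.ne' hy₁' j)
              (shiftSum_le μ x₂ y₂ hx₂.ne' hx₂' hy₂.ne' hy₂' j)
        _ ≤ x₁ ^ j.1 * y₁ ^ j.2 * θ + x₂ ^ j.1 * y₂ ^ j.2 * θ :=
            add_le_add (mul_le_mul_right (hg₁.trans le_self_add) _)
              (mul_le_mul_right (hg₂.trans le_self_add) _)
        _ = θ * (x₁ ^ j.1 * y₁ ^ j.2 + x₂ ^ j.1 * y₂ ^ j.2) := by ring
end

section
/- Let (S(n)) be the homogeneous random walk on Z^2 with jump distribution μ satisfying: μ is irreducible on Z^2, μ(j_1,j_2)=0 whenever j_2 < -1, and the generating function P(x,y)=Σ μ(k) x^{k_1}y^{k_2} is finite in a neighborhood of D = {P ≤ 1}, which is compact with nonempty interior. Let τ_1 = inf{n ≥ 1 : S(n) ∈ Z×{0}}. Then for every j = (j_1,j_2) with j_2 > 0 and every x ∈ [x*_P, x**_P], E_j[x^{S_1(τ_1)} ; τ_1 < ∞] = x^{j_1} · (Y_1(x))^{j_2}, where Y_1(x) is the smallest positive solution of P(x,y)=1. -/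
/-!
Tilting the jump law by `x ^ k₁ * Y₁ ^ k₂` gives again a probability law because
`P(x, Y₁) = 1`. Under the tilt the left-hand side becomes `x ^ j₁ * Y₁ ^ j₂` times the probability
`h(j₂)` that the second coordinate, a walk on `ℤ` whose downward jumps have size at most one,
ever reaches `0` from `j₂`. Such a walk must pass through every intermediate level, so
`h(m) = q ^ m` with `q = h(1) ≤ 1`, and first-step analysis shows that `Y₁ * q` is again a root of
`P(x, ·) = 1`. Minimality of `Y₁` forces `q = 1`.

All series are manipulated in `ℝ≥0∞` and brought back to `ℝ` once they are known to be finite.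
-/

/-- `n`-step transition function of the (sub)Markov chain with one-step kernel `p`. -/
noncomputable def iterK {S : Type*} [DecidableEq S] (p : S → S → ℝ) : ℕ → S → S → ℝ
  | 0 => fun j k => if j = k then 1 else 0
  | n + 1 => fun j k => ∑' l, iterK p n j l * p l k

/-- One-step kernel of the homogeneous random walk on `ℤ²` with jump law `μ`. -/
noncomputable def homK (μ : ℤ × ℤ → ℝ) : ℤ × ℤ → ℤ × ℤ → ℝ := fun j k => μ (k - j)

/-- The homogeneous kernel killed on the horizontal axis `ℤ × {0}`. -/
noncomputable def axisKillK (μ : ℤ × ℤ → ℝ) : ℤ × ℤ → ℤ × ℤ → ℝ :=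
  fun j k => if k.2 = 0 then 0 else μ (k - j)

/-- Generating function `∑_k ν(k) x^{k₁} y^{k₂}` of a jump measure on `ℤ²`. -/
noncomputable def genG (ν : ℤ × ℤ → ℝ) (x y : ℝ) : ℝ :=
  ∑' k : ℤ × ℤ, ν k * x ^ k.1 * y ^ k.2

/-- `E_j[x^{S₁(τ₁)} ; τ₁ < ∞]`, where `τ₁ = inf{n ≥ 1 : S(n) ∈ ℤ×{0}}`. -/
noncomputable def hitExp (μ : ℤ × ℤ → ℝ) (x : ℝ) (j : ℤ × ℤ) : ℝ :=
  ∑' n : ℕ, ∑' k₁ : ℤ,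
    (∑' l : ℤ × ℤ, iterK (axisKillK μ) n j l * homK μ l (k₁, 0)) * x ^ k₁

open scoped ENNReal

lemma summable_of_tsum_ne_zero {α : Type*} {f : α → ℝ} (h : ∑' a, f a ≠ 0) : Summable f :=
  not_imp_comm.1 tsum_eq_zero_of_not_summable h

namespace ENNReal

lemma ofReal_zpow {x : ℝ} (hx : 0 < x) (n : ℤ) :
    ENNReal.ofReal (x ^ n) = ENNReal.ofReal x ^ n := by
  cases n with
  | ofNat n => simpa using ENNReal.ofReal_pow hx.le n
  | negSucc n =>
    rw [zpow_negSucc, zpow_negSucc, ENNReal.ofReal_inv_of_pos (pow_pos hx _),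
      ENNReal.ofReal_pow hx.le]

protected lemma mul_zpow {a b : ℝ≥0∞} (ha : a ≠ 0) (ha' : a ≠ ∞) (hb : b ≠ 0) (hb' : b ≠ ∞)
    (n : ℤ) : (a * b) ^ n = a ^ n * b ^ n := by
  lift a to NNReal using ha'
  lift b to NNReal using hb'
  simp only [ne_eq, coe_eq_zero] at ha hb
  rw [← coe_mul, ← coe_zpow (mul_ne_zero ha hb), ← coe_zpow ha, ← coe_zpow hb, mul_zpow, coe_mul]

lemma ofReal_tsum_of_nonneg_of_ne_top {α : Type*} {f : α → ℝ} (hf : ∀ a, 0 ≤ f a)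
    (h : ∑' a, ENNReal.ofReal (f a) ≠ ∞) :
    ENNReal.ofReal (∑' a, f a) = ∑' a, ENNReal.ofReal (f a) :=
  ENNReal.ofReal_tsum_of_nonneg hf <|
    (ENNReal.summable_toReal h).congr fun a => ENNReal.toReal_ofReal (hf a)

lemma zpow_sub_mul_zpow_sub {x : ℝ≥0∞} (hx0 : x ≠ 0) (hx : x ≠ ∞) (a b c : ℤ) :
    x ^ (b - a) * x ^ (c - b) = x ^ (c - a) := by
  rw [← ENNReal.zpow_add hx0 hx, sub_add_sub_cancel']

lemma tsum_mul_tsum_eq_tsum_sum_range (f g : ℕ → ℝ≥0∞) :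
    (∑' n, f n) * ∑' n, g n = ∑' n, ∑ k ∈ Finset.range (n + 1), f k * g (n - k) := by
  rw [← ENNReal.tsum_mul_right]
  simp_rw [← ENNReal.tsum_mul_left]
  rw [← ENNReal.tsum_prod (f := fun k l => f k * g l),
    ← Finset.HasAntidiagonal.sigmaAntidiagonalEquivProd.tsum_eq, ENNReal.tsum_sigma']
  simp_rw [← Finset.Nat.sum_antidiagonal_eq_sum_range_succ fun k l => f k * g l,
    ← Finset.tsum_subtype]
  rfl

end ENNReal

namespace RandomWalk

section Iterates

variable {S : Type*} [DecidableEq S]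

noncomputable def ennIterK (p : S → S → ℝ≥0∞) : ℕ → S → S → ℝ≥0∞
  | 0 => fun j k => if j = k then 1 else 0
  | n + 1 => fun j k => ∑' l, ennIterK p n j l * p l k

variable (p : S → S → ℝ≥0∞)

@[simp] lemma ennIterK_zero (j k : S) : ennIterK p 0 j k = if j = k then 1 else 0 := rfl

lemma ennIterK_succ (n : ℕ) (j k : S) :
    ennIterK p (n + 1) j k = ∑' l, ennIterK p n j l * p l k := rfl

lemma ennIterK_one (j k : S) : ennIterK p 1 j k = p j k := by
  rw [ennIterK_succ, tsum_eq_single j fun l hl => by simp [Ne.symm hl]]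
  simp

lemma ennIterK_succ' (n : ℕ) (j k : S) :
    ennIterK p (n + 1) j k = ∑' l, p j l * ennIterK p n l k := by
  induction n generalizing k with
  | zero =>
    rw [ennIterK_one, tsum_eq_single k fun l hl => by simp [hl]]
    simp
  | succ n ih =>
    calc ennIterK p (n + 2) j k = ∑' l, (∑' m, p j m * ennIterK p n m l) * p l k := by
          simp only [ennIterK_succ p (n + 1), ih]
      _ = ∑' m, p j m * ∑' l, ennIterK p n m l * p l k := by
          simp only [← ENNReal.tsum_mul_right, ← ENNReal.tsum_mul_left, mul_assoc]
          exact ENNReal.tsum_comm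
      _ = ∑' m, p j m * ennIterK p (n + 1) m k := rfl

lemma tsum_ennIterK_le_one (hp : ∀ l, ∑' k, p l k ≤ 1) (n : ℕ) (j : S) :
    ∑' k, ennIterK p n j k ≤ 1 := by
  induction n with
  | zero => simp
  | succ n ih =>
    calc ∑' k, ennIterK p (n + 1) j k = ∑' l, ennIterK p n j l * ∑' k, p l k := by
          simp only [ennIterK_succ, ← ENNReal.tsum_mul_left]
          exact ENNReal.tsum_comm
      _ ≤ ∑' l, ennIterK p n j l * 1 := by gcongr with l; exact hp l
      _ ≤ 1 := by simpa using ih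

lemma iterK_nonneg {q : S → S → ℝ} (hq : ∀ l k, 0 ≤ q l k) (n : ℕ) (j k : S) :
    0 ≤ iterK q n j k := by
  induction n generalizing k with
  | zero => simp only [iterK]; split_ifs <;> norm_num
  | succ n ih => exact tsum_nonneg fun l => mul_nonneg (ih l) (hq l k)

lemma ofReal_iterK {q : S → S → ℝ} (hq : ∀ l k, 0 ≤ q l k)
    (hmass : ∀ l, ∑' k, ENNReal.ofReal (q l k) ≤ 1) (n : ℕ) (j k : S) :
    ENNReal.ofReal (iterK q n j k) = ennIterK (fun a b => ENNReal.ofReal (q a b)) n j k := by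
  induction n generalizing k with
  | zero => simp only [iterK, ennIterK_zero]; split_ifs <;> simp
  | succ n ih =>
    have hterm : ∀ l, ENNReal.ofReal (iterK q n j l * q l k)
        = ennIterK (fun a b => ENNReal.ofReal (q a b)) n j l * ENNReal.ofReal (q l k) := fun l => by
      rw [ENNReal.ofReal_mul (iterK_nonneg hq n j l), ih]
    have hfin : ∑' l, ENNReal.ofReal (iterK q n j l * q l k) ≠ ∞ := by
      refine ne_top_of_le_ne_top ENNReal.one_ne_top ?_
      calc ∑' l, ENNReal.ofReal (iterK q n j l * q l k)
          ≤ ∑' l, ennIterK (fun a b => ENNReal.ofReal (q a b)) n j l * 1 := by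
            simp only [hterm]
            gcongr with l
            exact (ENNReal.le_tsum k).trans (hmass l)
        _ ≤ 1 := by simpa using tsum_ennIterK_le_one _ hmass n j
    rw [iterK, ENNReal.ofReal_tsum_of_nonneg_of_ne_top
      (fun l => mul_nonneg (iterK_nonneg hq n j l) (hq l k)) hfin, ennIterK_succ]
    exact tsum_congr hterm

end Iterates

section Killed

variable {G : Type*} [AddGroup G]

open Classical in
noncomputable def killedK (ν : G → ℝ≥0∞) (A : Set G) (a b : G) : ℝ≥0∞ :=
  if b ∈ A then 0 else ν (b - a)

variable (ν : G → ℝ≥0∞) (A : Set G) {a b : G}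

lemma killedK_of_mem (hb : b ∈ A) : killedK ν A a b = 0 := by simp [killedK, hb]

lemma killedK_of_notMem (hb : b ∉ A) : killedK ν A a b = ν (b - a) := by simp [killedK, hb]

lemma killedK_le : killedK ν A a b ≤ ν (b - a) := by
  unfold killedK; split_ifs <;> simp

lemma tsum_killedK_le_one (hν : ∑' d, ν d ≤ 1) (a : G) : ∑' b, killedK ν A a b ≤ 1 :=
  calc ∑' b, killedK ν A a b ≤ ∑' b, ν (b - a) := ENNReal.tsum_le_tsum fun _ => killedK_le ν A
    _ = ∑' d, ν d := (Equiv.subRight a).tsum_eq ν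
    _ ≤ 1 := hν

variable [DecidableEq G]

lemma ennIterK_killedK_singleton_add (z t : G) (n : ℕ) (a b : G) :
    ennIterK (killedK ν {z + t}) n (a + t) (b + t) = ennIterK (killedK ν {z}) n a b := by
  induction n generalizing b with
  | zero => simp
  | succ n ih =>
    rw [ennIterK_succ, ennIterK_succ, ← (Equiv.addRight t).tsum_eq]
    refine tsum_congr fun l => ?_
    simp only [Equiv.coe_addRight, ih, killedK, Set.mem_singleton_iff, add_left_inj,
      add_sub_add_right_eq_sub]

end Killed

section FirstPassage

variable (w : ℤ → ℝ≥0∞)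

/-- Probability that the walk on `ℤ` with jump law `w`, started at `a`, first visits `z` at
step `n + 1`. -/
noncomputable def firstHit (z : ℤ) (n : ℕ) (a : ℤ) : ℝ≥0∞ :=
  ∑' c, ennIterK (killedK w {z}) n a c * w (z - c)

noncomputable def hitProb (z a : ℤ) : ℝ≥0∞ := ∑' n, firstHit w z n a

lemma firstHit_zero (z a : ℤ) : firstHit w z 0 a = w (z - a) := by
  rw [firstHit, tsum_eq_single a fun c hc => by simp [Ne.symm hc]]
  simp

lemma firstHit_succ (z : ℤ) (n : ℕ) (a : ℤ) :
    firstHit w z (n + 1) a = ∑' c, killedK w {z} a c * firstHit w z n c := by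
  simp only [firstHit, ennIterK_succ', ← ENNReal.tsum_mul_right, ← ENNReal.tsum_mul_left,
    mul_assoc]
  exact ENNReal.tsum_comm

lemma hitProb_eq_add_tsum (z a : ℤ) :
    hitProb w z a = w (z - a) + ∑' c, killedK w {z} a c * hitProb w z c := by
  rw [hitProb, tsum_eq_zero_add' ENNReal.summable, firstHit_zero]
  congr 1
  simp only [firstHit_succ, hitProb, ← ENNReal.tsum_mul_left]
  exact ENNReal.tsum_comm

lemma hitProb_add (z t a : ℤ) : hitProb w (z + t) (a + t) = hitProb w z a := by
  refine tsum_congr fun n => ?_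
  rw [firstHit, ← (Equiv.addRight t).tsum_eq]
  simp only [Equiv.coe_addRight, ennIterK_killedK_singleton_add, add_sub_add_right_eq_sub, firstHit]

lemma tsum_killedK_singleton_add_eq_one (hw : ∑' d, w d = 1) (z a : ℤ) :
    ∑' c, killedK w {z} a c + w (z - a) = 1 := by
  have hsplit : ∀ c, w (c - a) = killedK w {z} a c + if c = z then w (z - a) else 0 := fun c => by
    by_cases hc : c = z <;> simp [killedK, hc]
  rw [← tsum_ite_eq z (fun _ => w (z - a)), ← ENNReal.tsum_add, ← tsum_congr hsplit, ← hw]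
  exact (Equiv.subRight a).tsum_eq w

lemma sum_firstHit_add_tsum_ennIterK (hw : ∑' d, w d = 1) (z a : ℤ) (N : ℕ) :
    ∑ n ∈ Finset.range N, firstHit w z n a + ∑' c, ennIterK (killedK w {z}) N a c = 1 := by
  induction N with
  | zero => simp
  | succ N ih =>
    have hstep : ∑' c, ennIterK (killedK w {z}) (N + 1) a c + firstHit w z N a
        = ∑' c, ennIterK (killedK w {z}) N a c := by
      simp only [ennIterK_succ, firstHit]
      rw [ENNReal.tsum_comm, ← ENNReal.tsum_add]
      refine tsum_congr fun l => ?_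
      rw [ENNReal.tsum_mul_left, ← mul_add, tsum_killedK_singleton_add_eq_one w hw, mul_one]
    rw [Finset.sum_range_succ, add_assoc, add_comm (firstHit w z N a), hstep, ih]

lemma hitProb_le_one (hw : ∑' d, w d = 1) (z a : ℤ) : hitProb w z a ≤ 1 := by
  rw [hitProb, ENNReal.tsum_eq_iSup_nat]
  exact iSup_le fun N => le_self_add.trans (sum_firstHit_add_tsum_ennIterK w hw z a N).le

end FirstPassage

section SkipFree

variable {w : ℤ → ℝ≥0∞}

lemma killedK_eq_zero_of_add_one_lt (hskip : ∀ d : ℤ, d < -1 → w d = 0) (A : Set ℤ)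
    {a l : ℤ} (h : l + 1 < a) : killedK w A a l = 0 :=
  le_antisymm ((killedK_le w A).trans (hskip _ (by omega)).le) bot_le

lemma killedK_singleton_eq (hskip : ∀ d : ℤ, d < -1 → w d = 0) {z m a : ℤ} (hzm : z < m)
    (hma : m < a) (l : ℤ) :
    killedK w {z} a l = killedK w {m} a l + if l = m then w (m - a) else 0 := by
  rcases lt_trichotomy l m with hlm | rfl | hlm
  · rw [killedK_eq_zero_of_add_one_lt hskip _ (by omega),
      killedK_eq_zero_of_add_one_lt hskip _ (by omega), if_neg hlm.ne, add_zero]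
  · rw [killedK_of_notMem _ _ (by simpa using hzm.ne'), killedK_of_mem _ _ (Set.mem_singleton l),
      if_pos rfl, zero_add]
  · rw [killedK_of_notMem _ _ (by simpa using (hzm.trans hlm).ne'),
      killedK_of_notMem _ _ (by simpa using hlm.ne'), if_neg hlm.ne', add_zero]

/-- Before reaching `z < m` from above `m`, a skip-free walk passes through `m`. -/
lemma ennIterK_killedK_eq_sum (hskip : ∀ d : ℤ, d < -1 → w d = 0) {z m c : ℤ} (hzm : z < m)
    (hc : c ≤ m) (n : ℕ) {a : ℤ} (hma : m < a) :
    ennIterK (killedK w {z}) n a c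
      = ∑ k ∈ Finset.range n, firstHit w m k a * ennIterK (killedK w {z}) (n - (k + 1)) m c := by
  induction n generalizing a with
  | zero => rw [ennIterK_zero, if_neg (by omega), Finset.sum_range_zero]
  | succ n ih =>
    have hterm : ∀ l, killedK w {m} a l * ennIterK (killedK w {z}) n l c
        = ∑ k ∈ Finset.range n,
            killedK w {m} a l * firstHit w m k l * ennIterK (killedK w {z}) (n - (k + 1)) m c := by
      intro l
      simp only [mul_assoc, ← Finset.mul_sum]
      rcases lt_trichotomy l m with hl | rfl | hl
      · simp [killedK_eq_zero_of_add_one_lt hskip _ (show l + 1 < a by omega)]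
      · simp [killedK_of_mem]
      · rw [ih hl]
    calc ennIterK (killedK w {z}) (n + 1) a c
        = ∑' l, killedK w {z} a l * ennIterK (killedK w {z}) n l c := ennIterK_succ' _ _ _ _
      _ = ∑' l, killedK w {m} a l * ennIterK (killedK w {z}) n l c
            + w (m - a) * ennIterK (killedK w {z}) n m c := by
          simp only [killedK_singleton_eq hskip hzm hma, add_mul, ENNReal.tsum_add, ite_mul,
            zero_mul, tsum_ite_eq]
      _ = ∑ k ∈ Finset.range n,
              firstHit w m (k + 1) a * ennIterK (killedK w {z}) (n - (k + 1)) m c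
            + firstHit w m 0 a * ennIterK (killedK w {z}) n m c := by
          rw [tsum_congr hterm, Summable.tsum_finsetSum fun _ _ => ENNReal.summable, firstHit_zero]
          simp only [firstHit_succ, ENNReal.tsum_mul_right]
      _ = _ := by
          rw [Finset.sum_range_succ']
          simp only [Nat.add_sub_add_right, Nat.sub_zero]

lemma firstHit_succ_eq_sum (hskip : ∀ d : ℤ, d < -1 → w d = 0) {z m a : ℤ} (hzm : z < m)
    (hma : m < a) (n : ℕ) :
    firstHit w z (n + 1) a
      = ∑ k ∈ Finset.range (n + 1), firstHit w m k a * firstHit w z (n - k) m := by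
  have hterm : ∀ c, ennIterK (killedK w {z}) (n + 1) a c * w (z - c)
      = ∑ k ∈ Finset.range (n + 1),
          firstHit w m k a * (ennIterK (killedK w {z}) (n - k) m c * w (z - c)) := fun c => by
    by_cases hc : c ≤ m
    · rw [ennIterK_killedK_eq_sum hskip hzm hc _ hma, Finset.sum_mul]
      simp only [Nat.add_sub_add_right, mul_assoc]
    · simp [hskip (z - c) (by omega)]
  rw [firstHit, tsum_congr hterm, Summable.tsum_finsetSum fun _ _ => ENNReal.summable]
  simp only [ENNReal.tsum_mul_left, firstHit]

/-- Strong Markov property at the first visit to `m`. -/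
lemma hitProb_eq_mul (hskip : ∀ d : ℤ, d < -1 → w d = 0) {z m a : ℤ} (hzm : z < m)
    (hma : m < a) : hitProb w z a = hitProb w m a * hitProb w z m := by
  rw [hitProb, tsum_eq_zero_add' ENNReal.summable, firstHit_zero, hskip _ (by omega), zero_add,
    hitProb, hitProb, ENNReal.tsum_mul_tsum_eq_tsum_sum_range]
  exact tsum_congr (firstHit_succ_eq_sum hskip hzm hma)

lemma hitProb_zero_add_one_eq_pow (hskip : ∀ d : ℤ, d < -1 → w d = 0) (n : ℕ) :
    hitProb w 0 (n + 1) = hitProb w 0 1 ^ (n + 1) := by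
  induction n with
  | zero => simp
  | succ n ih =>
    have hstep : hitProb w (n + 1) (n + 1 + 1) = hitProb w 0 1 := by
      rw [← hitProb_add w 0 (n + 1) 1]
      congr 1 <;> ring
    rw [Nat.cast_succ, hitProb_eq_mul hskip (m := n + 1) (by omega) (by omega), hstep, ih,
      pow_succ' _ (n + 1)]

lemma hitProb_zero_one_ne_zero (hw : w (-1) ≠ 0) : hitProb w 0 1 ≠ 0 := by
  have h : firstHit w 0 0 1 ≤ hitProb w 0 1 := ENNReal.le_tsum 0
  rw [firstHit_zero, zero_sub] at h
  exact ne_bot_of_le_ne_bot hw h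

/-- First-step analysis from `1`, combined with `hitProb w 0 c = q ^ c` for `c ≥ 1`. -/
lemma tsum_mul_zpow_hitProb_zero_one (hw1 : ∑' d, w d = 1) (hskip : ∀ d : ℤ, d < -1 → w d = 0)
    (hw : w (-1) ≠ 0) : ∑' d, w d * hitProb w 0 1 ^ d = 1 := by
  set q := hitProb w 0 1
  have hq0 : q ≠ 0 := hitProb_zero_one_ne_zero hw
  have hqt : q ≠ ∞ := ne_top_of_le_ne_top ENNReal.one_ne_top (hitProb_le_one w hw1 0 1)
  have hshift : ∀ c : ℤ, q ^ (c - 1) * q = q ^ c := fun c =>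
    calc q ^ (c - 1) * q = q ^ (c - 1) * q ^ (1 : ℤ) := by rw [zpow_one]
      _ = q ^ c := by rw [← ENNReal.zpow_add hq0 hqt, sub_add_cancel]
  have hterm : ∀ c : ℤ, w (c - 1) * q ^ c
      = killedK w {0} 1 c * hitProb w 0 c + if c = 0 then w (-1) else 0 := fun c => by
    rcases lt_trichotomy c 0 with hc | rfl | hc
    · simp [hskip (c - 1) (by omega), killedK_eq_zero_of_add_one_lt hskip _ (by omega : c + 1 < 1),
        hc.ne]
    · simp [killedK_of_mem]
    · obtain ⟨n, rfl⟩ : ∃ n : ℕ, c = n + 1 := ⟨(c - 1).toNat, by omega⟩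
      rw [killedK_of_notMem _ _ (by rw [Set.mem_singleton_iff]; omega),
        hitProb_zero_add_one_eq_pow hskip, if_neg (by omega), add_zero, ← zpow_natCast]
      push_cast
      rfl
  refine (ENNReal.mul_left_inj hq0 hqt).1 ?_
  calc (∑' d, w d * q ^ d) * q = ∑' c : ℤ, w (c - 1) * q ^ c := by
        rw [← ENNReal.tsum_mul_right, ← (Equiv.subRight (1 : ℤ)).tsum_eq]
        refine tsum_congr fun c => ?_
        rw [Equiv.subRight_apply, mul_assoc, hshift]
    _ = q := by
        rw [tsum_congr hterm, ENNReal.tsum_add, tsum_ite_eq, add_comm]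
        simpa using (hitProb_eq_add_tsum w 0 1).symm
    _ = 1 * q := (one_mul q).symm

lemma hitProb_eq_one (hw1 : ∑' d, w d = 1) (hskip : ∀ d : ℤ, d < -1 → w d = 0)
    (hw : w (-1) ≠ 0)
    (hmin : ∀ s : ℝ≥0∞, s ≠ 0 → s ≠ ∞ → ∑' d, w d * s ^ d = 1 → 1 ≤ s) {m : ℤ} (hm : 0 < m) :
    hitProb w 0 m = 1 := by
  have hq : hitProb w 0 1 = 1 :=
    le_antisymm (hitProb_le_one w hw1 0 1)
      (hmin _ (hitProb_zero_one_ne_zero hw)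
        (ne_top_of_le_ne_top ENNReal.one_ne_top (hitProb_le_one w hw1 0 1))
        (tsum_mul_zpow_hitProb_zero_one hw1 hskip hw))
  obtain ⟨n, rfl⟩ : ∃ n : ℕ, m = n + 1 := ⟨(m - 1).toNat, by omega⟩
  rw [hitProb_zero_add_one_eq_pow hskip, hq, one_pow]

end SkipFree

section Plane

noncomputable def expTilt (ν : ℤ × ℤ → ℝ≥0∞) (x y : ℝ≥0∞) (k : ℤ × ℤ) : ℝ≥0∞ :=
  ν k * x ^ k.1 * y ^ k.2

noncomputable def sndMarginal (ν : ℤ × ℤ → ℝ≥0∞) (d : ℤ) : ℝ≥0∞ := ∑' k₁, ν (k₁, d)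

/-- Probability that the walk on `ℤ²` with jump law `ν`, started at `j`, first visits the
horizontal axis at step `n + 1`, and does so at `(k₁, 0)`. -/
noncomputable def axisHit (ν : ℤ × ℤ → ℝ≥0∞) (n : ℕ) (j : ℤ × ℤ) (k₁ : ℤ) : ℝ≥0∞ :=
  ∑' l, ennIterK (killedK ν {k | k.2 = 0}) n j l * ν ((k₁, 0) - l)

variable (ν : ℤ × ℤ → ℝ≥0∞) {x y : ℝ≥0∞}

lemma axisHit_le_one (hν : ∑' k, ν k ≤ 1) (n : ℕ) (j : ℤ × ℤ) (k₁ : ℤ) :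
    axisHit ν n j k₁ ≤ 1 :=
  calc axisHit ν n j k₁ ≤ ∑' l, ennIterK (killedK ν {k | k.2 = 0}) n j l * 1 := by
        unfold axisHit
        gcongr with l
        exact (ENNReal.le_tsum _).trans hν
    _ ≤ 1 := by simpa using tsum_ennIterK_le_one _ (tsum_killedK_le_one ν _ hν) n j

lemma killedK_expTilt (A : Set (ℤ × ℤ)) (a b : ℤ × ℤ) :
    killedK (expTilt ν x y) A a b = killedK ν A a b * x ^ (b.1 - a.1) * y ^ (b.2 - a.2) := by
  unfold killedK expTilt
  split_ifs <;> simp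

lemma ennIterK_killedK_expTilt (hx0 : x ≠ 0) (hx : x ≠ ∞) (hy0 : y ≠ 0) (hy : y ≠ ∞)
    (A : Set (ℤ × ℤ)) (n : ℕ) (j l : ℤ × ℤ) :
    ennIterK (killedK (expTilt ν x y) A) n j l
      = ennIterK (killedK ν A) n j l * x ^ (l.1 - j.1) * y ^ (l.2 - j.2) := by
  induction n generalizing l with
  | zero => by_cases h : j = l <;> simp [h]
  | succ n ih =>
    simp only [ennIterK_succ, ← ENNReal.tsum_mul_right]
    refine tsum_congr fun m => ?_
    rw [ih, killedK_expTilt, ← ENNReal.zpow_sub_mul_zpow_sub hx0 hx j.1 m.1 l.1,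
      ← ENNReal.zpow_sub_mul_zpow_sub hy0 hy j.2 m.2 l.2]
    ring

lemma axisHit_expTilt (hx0 : x ≠ 0) (hx : x ≠ ∞) (hy0 : y ≠ 0) (hy : y ≠ ∞) (n : ℕ)
    (j : ℤ × ℤ) (k₁ : ℤ) :
    axisHit (expTilt ν x y) n j k₁ = axisHit ν n j k₁ * x ^ (k₁ - j.1) * y ^ (-j.2) := by
  simp only [axisHit, ← ENNReal.tsum_mul_right]
  refine tsum_congr fun l => ?_
  rw [ennIterK_killedK_expTilt ν hx0 hx hy0 hy, expTilt, neg_eq_zero_sub,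
    ← ENNReal.zpow_sub_mul_zpow_sub hx0 hx j.1 l.1 k₁,
    ← ENNReal.zpow_sub_mul_zpow_sub hy0 hy j.2 l.2 0]
  simp only [Prod.fst_sub, Prod.snd_sub]
  ring

lemma tsum_killedK_axis (m : ℤ × ℤ) (c : ℤ) :
    ∑' l₁, killedK ν {k | k.2 = 0} m (l₁, c) = killedK (sndMarginal ν) {0} m.2 c := by
  by_cases hc : c = 0
  · simp [killedK, hc]
  · simp only [killedK, Set.mem_ofPred_eq, hc, Set.mem_singleton_iff, if_false, sndMarginal]
    exact (Equiv.subRight m.1).tsum_eq fun t => ν (t, c - m.2)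

lemma tsum_ennIterK_killedK_axis (n : ℕ) (j : ℤ × ℤ) (c : ℤ) :
    ∑' l₁, ennIterK (killedK ν {k | k.2 = 0}) n j (l₁, c)
      = ennIterK (killedK (sndMarginal ν) {0}) n j.2 c := by
  induction n generalizing c with
  | zero =>
    by_cases hc : j.2 = c
    · rw [tsum_eq_single j.1 fun l₁ hl => by simp [Prod.ext_iff, Ne.symm hl]]
      simp [Prod.ext_iff, hc]
    · simp [Prod.ext_iff, hc]
  | succ n ih =>
    calc ∑' l₁, ennIterK (killedK ν {k | k.2 = 0}) (n + 1) j (l₁, c)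
        = ∑' m : ℤ × ℤ, ennIterK (killedK ν {k | k.2 = 0}) n j m
            * killedK (sndMarginal ν) {0} m.2 c := by
          simp only [ennIterK_succ, ← tsum_killedK_axis, ← ENNReal.tsum_mul_left]
          exact ENNReal.tsum_comm
      _ = ∑' m₂, ennIterK (killedK (sndMarginal ν) {0}) n j.2 m₂
            * killedK (sndMarginal ν) {0} m₂ c := by
          rw [ENNReal.tsum_prod', ENNReal.tsum_comm]
          simp only [ENNReal.tsum_mul_right, ih]

lemma tsum_axisHit (n : ℕ) (j : ℤ × ℤ) :
    ∑' k₁, axisHit ν n j k₁ = firstHit (sndMarginal ν) 0 n j.2 := by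
  have hmarg : ∀ l : ℤ × ℤ, ∑' k₁, ν ((k₁, 0) - l) = sndMarginal ν (0 - l.2) := fun l => by
    simp only [sndMarginal]
    exact (Equiv.subRight l.1).tsum_eq fun t => ν (t, 0 - l.2)
  calc ∑' k₁, axisHit ν n j k₁
      = ∑' l : ℤ × ℤ, ennIterK (killedK ν {k | k.2 = 0}) n j l * sndMarginal ν (0 - l.2) := by
        simp only [axisHit, ← hmarg, ← ENNReal.tsum_mul_left]
        exact ENNReal.tsum_comm
    _ = firstHit (sndMarginal ν) 0 n j.2 := by
        rw [ENNReal.tsum_prod', ENNReal.tsum_comm, firstHit]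
        simp only [ENNReal.tsum_mul_right, tsum_ennIterK_killedK_axis]

/-- Exponential change of measure, followed by projection onto the second coordinate. -/
lemma tsum_tsum_axisHit_mul_zpow (hx0 : x ≠ 0) (hx : x ≠ ∞) (hy0 : y ≠ 0) (hy : y ≠ ∞)
    (j : ℤ × ℤ) :
    ∑' n, ∑' k₁, axisHit ν n j k₁ * x ^ k₁
      = x ^ j.1 * y ^ j.2 * hitProb (sndMarginal (expTilt ν x y)) 0 j.2 := by
  have hterm : ∀ n k₁, axisHit ν n j k₁ * x ^ k₁
      = x ^ j.1 * y ^ j.2 * axisHit (expTilt ν x y) n j k₁ := fun n k₁ => by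
    rw [axisHit_expTilt ν hx0 hx hy0 hy]
    calc axisHit ν n j k₁ * x ^ k₁
        = axisHit ν n j k₁ * x ^ (j.1 - 0) * x ^ (k₁ - j.1) * (y ^ (j.2 - 0) * y ^ (0 - j.2)) := by
          rw [mul_assoc _ (x ^ (j.1 - 0)), ENNReal.zpow_sub_mul_zpow_sub hx0 hx,
            ENNReal.zpow_sub_mul_zpow_sub hy0 hy]
          simp
      _ = _ := by simp only [sub_zero, zero_sub]; ring
  simp only [hterm, ENNReal.tsum_mul_left, tsum_axisHit, hitProb]

lemma tsum_sndMarginal_mul (f : ℤ → ℝ≥0∞) :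
    ∑' d, sndMarginal ν d * f d = ∑' k : ℤ × ℤ, ν k * f k.2 := by
  rw [ENNReal.tsum_prod', ENNReal.tsum_comm]
  simp only [sndMarginal, ENNReal.tsum_mul_right]

lemma expTilt_mul_zpow_snd (hy0 : y ≠ 0) (hy : y ≠ ∞) {s : ℝ≥0∞} (hs0 : s ≠ 0) (hs : s ≠ ∞)
    (k : ℤ × ℤ) : expTilt ν x y k * s ^ k.2 = expTilt ν x (y * s) k := by
  rw [expTilt, expTilt, ENNReal.mul_zpow hy0 hy hs0 hs]
  ring

end Plane

section RealJumpLaw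

variable {μ : ℤ × ℤ → ℝ}

lemma iterK_homK_eq_zero (hμ : ∀ k : ℤ × ℤ, k.2 < 0 → μ k = 0) (n : ℕ) {j k : ℤ × ℤ}
    (h : k.2 < j.2) : iterK (homK μ) n j k = 0 := by
  induction n generalizing k with
  | zero => simp only [iterK]; rw [if_neg]; rintro rfl; exact h.false
  | succ n ih =>
    refine (tsum_congr fun l => ?_).trans tsum_zero
    rcases lt_or_ge l.2 j.2 with hl | hl
    · rw [ih hl, zero_mul]
    · rw [homK, hμ _ (by simp only [Prod.snd_sub]; omega), mul_zero]

/-- Otherwise the second coordinate could never decrease, contradicting irreducibility. -/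
lemma exists_pos_jump_snd_eq_neg_one (hnn : ∀ k, 0 ≤ μ k)
    (hsupp : ∀ k : ℤ × ℤ, k.2 < -1 → μ k = 0)
    (hirr : ∀ j k : ℤ × ℤ, ∃ n, 0 < iterK (homK μ) n j k) :
    ∃ k₁, 0 < μ (k₁, -1) := by
  by_contra! hdown
  have hμ : ∀ k : ℤ × ℤ, k.2 < 0 → μ k = 0 := fun k hk => by
    rcases lt_or_eq_of_le (show k.2 ≤ -1 by omega) with hk' | hk'
    · exact hsupp k hk'
    · exact le_antisymm (by simpa [← hk'] using hdown k.1) (hnn k)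
  obtain ⟨n, hn⟩ := hirr (0, 1) (0, 0)
  exact hn.ne' (iterK_homK_eq_zero hμ n (by norm_num))

lemma ofReal_mul_zpow_mul_zpow (hnn : ∀ k, 0 ≤ μ k) {x y : ℝ} (hx : 0 < x) (hy : 0 < y)
    (k : ℤ × ℤ) :
    ENNReal.ofReal (μ k * x ^ k.1 * y ^ k.2)
      = expTilt (ENNReal.ofReal ∘ μ) (ENNReal.ofReal x) (ENNReal.ofReal y) k := by
  rw [ENNReal.ofReal_mul (mul_nonneg (hnn k) (zpow_nonneg hx.le _)),
    ENNReal.ofReal_mul (hnn k), ENNReal.ofReal_zpow hx, ENNReal.ofReal_zpow hy, expTilt,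
    Function.comp_apply]

lemma genG_eq_one_iff (hnn : ∀ k, 0 ≤ μ k) {x y : ℝ} (hx : 0 < x) (hy : 0 < y) :
    genG μ x y = 1 ↔
      ∑' k, expTilt (ENNReal.ofReal ∘ μ) (ENNReal.ofReal x) (ENNReal.ofReal y) k = 1 := by
  have hterm : ∀ k : ℤ × ℤ, 0 ≤ μ k * x ^ k.1 * y ^ k.2 := fun k =>
    mul_nonneg (mul_nonneg (hnn k) (zpow_nonneg hx.le _)) (zpow_nonneg hy.le _)
  simp only [← ofReal_mul_zpow_mul_zpow hnn hx hy]
  constructor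
  · intro h
    have hs := summable_of_tsum_ne_zero (show genG μ x y ≠ 0 by rw [h]; exact one_ne_zero)
    rw [← ENNReal.ofReal_tsum_of_nonneg hterm hs, ← genG, h, ENNReal.ofReal_one]
  · intro h
    rw [← ENNReal.ofReal_tsum_of_nonneg_of_ne_top hterm (by simp [h]), ← genG,
      ENNReal.ofReal_eq_one] at h
    exact h

lemma ofReal_axisKillK (a b : ℤ × ℤ) :
    ENNReal.ofReal (axisKillK μ a b) = killedK (ENNReal.ofReal ∘ μ) {k | k.2 = 0} a b := by
  unfold axisKillK killedK
  split_ifs <;> simp_all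

lemma tsum_ofReal_eq_one (hnn : ∀ k, 0 ≤ μ k) (hprob : ∑' k, μ k = 1) :
    ∑' k, ENNReal.ofReal (μ k) = 1 := by
  rw [← ENNReal.ofReal_tsum_of_nonneg hnn (summable_of_tsum_ne_zero (by simp [hprob])), hprob,
    ENNReal.ofReal_one]

lemma axisKillK_nonneg (hnn : ∀ k, 0 ≤ μ k) (a b : ℤ × ℤ) : 0 ≤ axisKillK μ a b := by
  unfold axisKillK
  split_ifs
  exacts [le_rfl, hnn _]

lemma ofReal_iterK_axisKillK (hnn : ∀ k, 0 ≤ μ k) (hprob : ∑' k, μ k = 1) (n : ℕ)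
    (j l : ℤ × ℤ) :
    ENNReal.ofReal (iterK (axisKillK μ) n j l)
      = ennIterK (killedK (ENNReal.ofReal ∘ μ) {k | k.2 = 0}) n j l := by
  have hmass : ∀ a, ∑' b, ENNReal.ofReal (axisKillK μ a b) ≤ 1 := fun a =>
    (tsum_congr fun b => ofReal_axisKillK a b).trans_le
      (tsum_killedK_le_one _ _ (tsum_ofReal_eq_one hnn hprob).le a)
  rw [ofReal_iterK (axisKillK_nonneg hnn) hmass]
  congr
  funext a b
  exact ofReal_axisKillK a b

lemma ofReal_tsum_iterK_axisKillK_mul_homK (hnn : ∀ k, 0 ≤ μ k) (hprob : ∑' k, μ k = 1)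
    (n : ℕ) (j : ℤ × ℤ) (k₁ : ℤ) :
    ENNReal.ofReal (∑' l, iterK (axisKillK μ) n j l * homK μ l (k₁, 0))
      = axisHit (ENNReal.ofReal ∘ μ) n j k₁ := by
  have hterm : ∀ l, ENNReal.ofReal (iterK (axisKillK μ) n j l * homK μ l (k₁, 0))
      = ennIterK (killedK (ENNReal.ofReal ∘ μ) {k | k.2 = 0}) n j l
        * (ENNReal.ofReal ∘ μ) ((k₁, 0) - l) := fun l => by
    rw [ENNReal.ofReal_mul (iterK_nonneg (axisKillK_nonneg hnn) n j l),
      ofReal_iterK_axisKillK hnn hprob]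
    rfl
  have hterm_nn : ∀ l, 0 ≤ iterK (axisKillK μ) n j l * homK μ l (k₁, 0) := fun l =>
    mul_nonneg (iterK_nonneg (axisKillK_nonneg hnn) n j l) (hnn _)
  rw [ENNReal.ofReal_tsum_of_nonneg_of_ne_top hterm_nn, tsum_congr hterm, axisHit]
  rw [tsum_congr hterm]
  exact ne_top_of_le_ne_top ENNReal.one_ne_top
    (axisHit_le_one _ (tsum_ofReal_eq_one hnn hprob).le n j k₁)

lemma hitExp_eq_toReal (hnn : ∀ k, 0 ≤ μ k) (hprob : ∑' k, μ k = 1) {x : ℝ} (hx : 0 < x)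
    (j : ℤ × ℤ)
    (hfin : ∑' n, ∑' k₁, axisHit (ENNReal.ofReal ∘ μ) n j k₁ * ENNReal.ofReal x ^ k₁ ≠ ∞) :
    hitExp μ x j
      = (∑' n, ∑' k₁, axisHit (ENNReal.ofReal ∘ μ) n j k₁ * ENNReal.ofReal x ^ k₁).toReal := by
  have hinner_nn : ∀ n k₁, 0 ≤ ∑' l, iterK (axisKillK μ) n j l * homK μ l (k₁, 0) :=
    fun n k₁ => tsum_nonneg fun l => mul_nonneg (iterK_nonneg (axisKillK_nonneg hnn) n j l) (hnn _)
  have hterm_nn : ∀ n k₁, 0 ≤ (∑' l, iterK (axisKillK μ) n j l * homK μ l (k₁, 0)) * x ^ k₁ :=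
    fun n k₁ => mul_nonneg (hinner_nn n k₁) (zpow_nonneg hx.le _)
  have hrow : ∀ n, ENNReal.ofReal
      (∑' k₁, (∑' l, iterK (axisKillK μ) n j l * homK μ l (k₁, 0)) * x ^ k₁)
      = ∑' k₁, axisHit (ENNReal.ofReal ∘ μ) n j k₁ * ENNReal.ofReal x ^ k₁ := fun n => by
    have hterm : ∀ k₁,
        ENNReal.ofReal ((∑' l, iterK (axisKillK μ) n j l * homK μ l (k₁, 0)) * x ^ k₁)
          = axisHit (ENNReal.ofReal ∘ μ) n j k₁ * ENNReal.ofReal x ^ k₁ := fun k₁ => by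
      rw [ENNReal.ofReal_mul (hinner_nn n k₁), ofReal_tsum_iterK_axisKillK_mul_homK hnn hprob,
        ENNReal.ofReal_zpow hx]
    rw [ENNReal.ofReal_tsum_of_nonneg_of_ne_top (hterm_nn n), tsum_congr hterm]
    rw [tsum_congr hterm]
    exact ne_top_of_le_ne_top hfin (ENNReal.le_tsum n)
  rw [hitExp, ← ENNReal.toReal_ofReal (tsum_nonneg fun n => tsum_nonneg (hterm_nn n)),
    ENNReal.ofReal_tsum_of_nonneg_of_ne_top (fun n => tsum_nonneg (hterm_nn n)), tsum_congr hrow]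
  rw [tsum_congr hrow]
  exact hfin

noncomputable def tiltedSndLaw (μ : ℤ × ℤ → ℝ) (x y : ℝ) : ℤ → ℝ≥0∞ :=
  sndMarginal (expTilt (ENNReal.ofReal ∘ μ) (ENNReal.ofReal x) (ENNReal.ofReal y))

lemma tsum_tiltedSndLaw (hnn : ∀ k, 0 ≤ μ k) {x y : ℝ} (hx : 0 < x) (hy : 0 < y)
    (hroot : genG μ x y = 1) : ∑' d, tiltedSndLaw μ x y d = 1 := by
  have h := tsum_sndMarginal_mul
    (expTilt (ENNReal.ofReal ∘ μ) (ENNReal.ofReal x) (ENNReal.ofReal y)) 1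
  simp only [Pi.one_apply, mul_one] at h
  rw [tiltedSndLaw, h]
  exact (genG_eq_one_iff hnn hx hy).1 hroot

lemma tsum_tiltedSndLaw_mul_zpow_eq_one_iff (hnn : ∀ k, 0 ≤ μ k) {x y : ℝ} (hx : 0 < x)
    (hy : 0 < y) {s : ℝ≥0∞} (hs0 : s ≠ 0) (hs : s ≠ ∞) :
    ∑' d, tiltedSndLaw μ x y d * s ^ d = 1 ↔ genG μ x (y * s.toReal) = 1 := by
  rw [tiltedSndLaw, tsum_sndMarginal_mul _ (s ^ ·),
    tsum_congr (expTilt_mul_zpow_snd _ (ENNReal.ofReal_pos.2 hy).ne' ENNReal.ofReal_ne_top hs0 hs),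
    genG_eq_one_iff hnn hx (mul_pos hy (ENNReal.toReal_pos hs0 hs)),
    ENNReal.ofReal_mul hy.le, ENNReal.ofReal_toReal hs]

lemma tiltedSndLaw_eq_zero (hsupp : ∀ k : ℤ × ℤ, k.2 < -1 → μ k = 0) (x y : ℝ) {d : ℤ}
    (hd : d < -1) : tiltedSndLaw μ x y d = 0 :=
  ENNReal.tsum_eq_zero.2 fun k₁ => by simp [expTilt, hsupp (k₁, d) hd]

lemma tiltedSndLaw_neg_one_ne_zero (hnn : ∀ k, 0 ≤ μ k)
    (hsupp : ∀ k : ℤ × ℤ, k.2 < -1 → μ k = 0)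
    (hirr : ∀ j k : ℤ × ℤ, ∃ n, 0 < iterK (homK μ) n j k) {x y : ℝ} (hx : 0 < x) (hy : 0 < y) :
    tiltedSndLaw μ x y (-1) ≠ 0 := by
  obtain ⟨k₁, hk₁⟩ := exists_pos_jump_snd_eq_neg_one hnn hsupp hirr
  refine ne_bot_of_le_ne_bot ?_ (ENNReal.le_tsum k₁)
  simp [expTilt, hk₁, (ENNReal.zpow_pos (ENNReal.ofReal_pos.2 hx).ne' ENNReal.ofReal_ne_top _).ne',
    (ENNReal.zpow_pos (ENNReal.ofReal_pos.2 hy).ne' ENNReal.ofReal_ne_top _).ne']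

lemma hitExp_eq_mul_hitProb (hnn : ∀ k, 0 ≤ μ k) (hprob : ∑' k, μ k = 1) {x y : ℝ} (hx : 0 < x)
    (hy : 0 < y) (hroot : genG μ x y = 1) (j : ℤ × ℤ) :
    hitExp μ x j = x ^ j.1 * y ^ j.2 * (hitProb (tiltedSndLaw μ x y) 0 j.2).toReal := by
  have hX0 : ENNReal.ofReal x ≠ 0 := (ENNReal.ofReal_pos.2 hx).ne'
  have hY0 : ENNReal.ofReal y ≠ 0 := (ENNReal.ofReal_pos.2 hy).ne'
  have hexp := tsum_tsum_axisHit_mul_zpow (ENNReal.ofReal ∘ μ) hX0 ENNReal.ofReal_ne_top hY0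
    ENNReal.ofReal_ne_top j
  have hfin : ∑' n, ∑' k₁, axisHit (ENNReal.ofReal ∘ μ) n j k₁ * ENNReal.ofReal x ^ k₁ ≠ ∞ := by
    rw [hexp]
    refine ENNReal.mul_ne_top (ENNReal.mul_ne_top (ENNReal.zpow_ne_top hX0 ENNReal.ofReal_ne_top _)
      (ENNReal.zpow_ne_top hY0 ENNReal.ofReal_ne_top _)) (ne_top_of_le_ne_top ENNReal.one_ne_top ?_)
    exact hitProb_le_one _ (tsum_tiltedSndLaw hnn hx hy hroot) 0 j.2
  rw [hitExp_eq_toReal hnn hprob hx j hfin, hexp, ENNReal.toReal_mul, ENNReal.toReal_mul,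
    ← ENNReal.ofReal_zpow hx, ← ENNReal.ofReal_zpow hy, ENNReal.toReal_ofReal (zpow_nonneg hx.le _),
    ENNReal.toReal_ofReal (zpow_nonneg hy.le _), tiltedSndLaw]

end RealJumpLaw

end RandomWalk

open RandomWalk

theorem probabilistic_representation_Y1_general
    (μ : ℤ × ℤ → ℝ)
    (hnn : ∀ k, 0 ≤ μ k) (hprob : ∑' k : ℤ × ℤ, μ k = 1)
    (hsupp : ∀ k : ℤ × ℤ, k.2 < -1 → μ k = 0)
    (hirr : ∀ j k : ℤ × ℤ, ∃ n, 0 < iterK (homK μ) n j k)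
    (x Y₁ : ℝ) (hx : 0 < x)
    (hY₁pos : 0 < Y₁) (hY₁root : genG μ x Y₁ = 1)
    (hY₁min : ∀ y : ℝ, 0 < y → genG μ x y = 1 → Y₁ ≤ y) :
    ∀ j : ℤ × ℤ, 0 < j.2 → hitExp μ x j = x ^ j.1 * Y₁ ^ j.2 := by
  intro j hj
  have hroot_min : ∀ s : ℝ≥0∞, s ≠ 0 → s ≠ ∞ →
      ∑' d, tiltedSndLaw μ x Y₁ d * s ^ d = 1 → 1 ≤ s := by
    intro s hs0 hs h
    have hYs := hY₁min _ (mul_pos hY₁pos (ENNReal.toReal_pos hs0 hs))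
      ((tsum_tiltedSndLaw_mul_zpow_eq_one_iff hnn hx hY₁pos hs0 hs).1 h)
    rw [← ENNReal.ofReal_one, ENNReal.ofReal_le_iff_le_toReal hs]
    exact le_of_mul_le_mul_left (by simpa using hYs) hY₁pos
  rw [hitExp_eq_mul_hitProb hnn hprob hx hY₁pos hY₁root j,
    hitProb_eq_one (tsum_tiltedSndLaw hnn hx hY₁pos hY₁root)
      (fun _ => tiltedSndLaw_eq_zero hsupp x Y₁)
      (tiltedSndLaw_neg_one_ne_zero hnn hsupp hirr hx hY₁pos) hroot_min hj,
    ENNReal.toReal_one, mul_one]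

/-- Probabilistic representation of `Y₁`: for the homogeneous random walk on `ℤ²` with
irreducible jump law `μ`, downward second-coordinate jumps at most `1`, and generating
function finite near the compact level set `D` of nonempty interior,
`E_j[x^{S₁(τ₁)} ; τ₁ < ∞] = x^{j₁} · Y₁(x)^{j₂}` for `j₂ > 0` and
`x` in the projection of `D`, where `Y₁(x)` is the smallest positive root of `P(x,·) = 1`. -/
theorem probabilistic_representation_Y1
    (μ : ℤ × ℤ → ℝ)
    (hnn : ∀ k, 0 ≤ μ k) (hprob : ∑' k : ℤ × ℤ, μ k = 1)
    (hsupp : ∀ k : ℤ × ℤ, k.2 < -1 → μ k = 0)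
    (hirr : ∀ j k : ℤ × ℤ, ∃ n, 0 < iterK (homK μ) n j k)
    (hcpt : IsCompact {q : ℝ × ℝ | 0 < q.1 ∧ 0 < q.2 ∧ genG μ q.1 q.2 ≤ 1})
    (hint : (interior {q : ℝ × ℝ | 0 < q.1 ∧ 0 < q.2 ∧ genG μ q.1 q.2 ≤ 1}).Nonempty)
    (hfin : ∃ U : Set (ℝ × ℝ), IsOpen U ∧
      {q : ℝ × ℝ | 0 < q.1 ∧ 0 < q.2 ∧ genG μ q.1 q.2 ≤ 1} ⊆ U ∧
      ∀ q ∈ U, Summable (fun k : ℤ × ℤ => μ k * q.1 ^ k.1 * q.2 ^ k.2))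
    (x Y₁ : ℝ) (hx : 0 < x) (hxproj : ∃ y : ℝ, 0 < y ∧ genG μ x y ≤ 1)
    (hY₁pos : 0 < Y₁) (hY₁root : genG μ x Y₁ = 1)
    (hY₁min : ∀ y : ℝ, 0 < y → genG μ x y = 1 → Y₁ ≤ y) :
    ∀ j : ℤ × ℤ, 0 < j.2 → hitExp μ x j = x ^ j.1 * Y₁ ^ j.2 :=
  probabilistic_representation_Y1_general μ hnn hprob hsupp hirr x Y₁ hx hY₁pos hY₁root hY₁min
end

section
/- Under the hypotheses of the probabilistic representation of Y_1 (irreducible μ on Z^2 with downward second-coordinate jumps at most 1 and generating function P finite near the compact level set D of nonempty interior), the function Y_1(x) = E_{(0,1)}[x^{S_1(τ_1)} ; τ_1 < ∞] = Σ_{k_1∈Z} P_{(0,1)}(S(τ_1)=(k_1,0), τ_1<∞) x^{k_1} has all Laurent coefficients strictly positive, and consequently Y_1 is strictly convex on the segment [x*_P, x**_P]. -/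
/-- `P_{(0,1)}(S(τ₁) = (k₁,0), τ₁ < ∞)`: the Laurent coefficients of `Y₁`. -/
noncomputable def hitCoeff (μ : ℤ × ℤ → ℝ) (k₁ : ℤ) : ℝ :=
  ∑' n : ℕ, ∑' l : ℤ × ℤ, iterK (axisKillK μ) n ((0 : ℤ), (1 : ℤ)) l * homK μ l (k₁, 0)

open scoped ENNReal

/-- The `ℝ≥0∞`-valued counterpart of `iterK`, in which all sums may be rearranged freely. -/
noncomputable def iterE {S : Type*} [DecidableEq S] (p : S → S → ℝ≥0∞) : ℕ → S → S → ℝ≥0∞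
  | 0 => fun j k => if j = k then 1 else 0
  | n + 1 => fun j k => ∑' l, iterE p n j l * p l k

section iterE

variable {S : Type*} [DecidableEq S] {p : S → S → ℝ≥0∞}

lemma tsum_iterE_zero_mul (j : S) (f : S → ℝ≥0∞) : ∑' k, iterE p 0 j k * f k = f j := by
  simp [iterE, ite_mul, eq_comm (a := j)]

lemma tsum_iterE_succ_mul (n : ℕ) (j : S) (f : S → ℝ≥0∞) :
    ∑' k, iterE p (n + 1) j k * f k = ∑' l, iterE p n j l * ∑' k, p l k * f k := by
  simp only [iterE, ← ENNReal.tsum_mul_right, ← ENNReal.tsum_mul_left, mul_assoc]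
  exact ENNReal.tsum_comm

lemma tsum_iterE_le_one (hp : ∀ j, ∑' k, p j k ≤ 1) (n : ℕ) (j : S) :
    ∑' k, iterE p n j k ≤ 1 := by
  induction n generalizing j with
  | zero => simpa using (tsum_iterE_zero_mul (p := p) j 1).le
  | succ n ih =>
    calc ∑' k, iterE p (n + 1) j k = ∑' l, iterE p n j l * ∑' k, p l k * 1 := by
          simpa using tsum_iterE_succ_mul n j 1
      _ ≤ ∑' l, iterE p n j l * 1 := by gcongr with l; simpa using hp l
      _ ≤ 1 := by simp [ih j]

lemma iterE_ne_top (hp : ∀ j, ∑' k, p j k ≤ 1) (n : ℕ) (j k : S) : iterE p n j k ≠ ∞ :=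
  ne_top_of_le_ne_top ENNReal.one_ne_top ((ENNReal.le_tsum k).trans (tsum_iterE_le_one hp n j))

lemma mul_iterE_le_iterE_succ (n : ℕ) (j l k : S) :
    p j l * iterE p n l k ≤ iterE p (n + 1) j k := by
  induction n generalizing k with
  | zero =>
    by_cases h : l = k <;> simp [iterE, h, ite_mul, eq_comm (a := j)]
  | succ n ih =>
    calc p j l * iterE p (n + 1) l k = ∑' l', p j l * iterE p n l l' * p l' k := by
          simp only [iterE, ← ENNReal.tsum_mul_left, mul_assoc]
      _ ≤ ∑' l', iterE p (n + 1) j l' * p l' k := by gcongr with l'; exact ih l'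

lemma tsum_tsum_iterE_mul_le_of_superharmonic {g h : S → ℝ≥0∞}
    (hh : ∀ l, ∑' k, p l k * h k + g l ≤ h l) (j : S) :
    ∑' n, ∑' l, iterE p n j l * g l ≤ h j := by
  have hstep : ∀ n, ∑' k, iterE p (n + 1) j k * h k + ∑' l, iterE p n j l * g l ≤
      ∑' l, iterE p n j l * h l := fun n => by
    rw [tsum_iterE_succ_mul, ← ENNReal.tsum_add]
    gcongr with l
    rw [← mul_add]
    gcongr
    exact hh l
  have htel : ∀ N,
      ∑ n ∈ Finset.range N, ∑' l, iterE p n j l * g l + ∑' k, iterE p N j k * h k ≤ h j := by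
    intro N
    induction N with
    | zero => simp [tsum_iterE_zero_mul]
    | succ N ih =>
      rw [Finset.sum_range_succ, add_assoc, add_comm (∑' l, _ * g l)]
      exact (add_le_add le_rfl (hstep N)).trans ih
  exact ENNReal.tsum_le_of_sum_range_le fun N => le_self_add.trans (htel N)

end iterE

lemma iterK_eq_toReal_iterE {S : Type*} [DecidableEq S] {p : S → S → ℝ} (hp : ∀ j k, 0 ≤ p j k)
    (hsub : ∀ j, ∑' k, ENNReal.ofReal (p j k) ≤ 1) (n : ℕ) (j k : S) :
    iterK p n j k = (iterE (fun j k => ENNReal.ofReal (p j k)) n j k).toReal := by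
  induction n generalizing k with
  | zero => simp [iterK, iterE, apply_ite ENNReal.toReal]
  | succ n ih =>
    simp only [iterK, iterE]
    rw [ENNReal.tsum_toReal_eq fun l =>
      ENNReal.mul_ne_top (iterE_ne_top hsub n j l) ENNReal.ofReal_ne_top]
    congr 1 with l
    rw [ih, ENNReal.toReal_mul, ENNReal.toReal_ofReal (hp l k)]

noncomputable def killE (μ : ℤ × ℤ → ℝ) : ℤ × ℤ → ℤ × ℤ → ℝ≥0∞ :=
  fun j k => ENNReal.ofReal (axisKillK μ j k)

/-- `hitE μ j k` is the probability that the walk started at `j` first enters `ℤ × {0}` at `k`. -/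
noncomputable def hitE (μ : ℤ × ℤ → ℝ) (j k : ℤ × ℤ) : ℝ≥0∞ :=
  ∑' n, ∑' l, iterE (killE μ) n j l * ENNReal.ofReal (μ (k - l))

lemma ENNReal.tsum_ite_snd_eq {α β : Type*} [DecidableEq β] (f : α × β → ℝ≥0∞) (b : β) :
    ∑' k, (if k.2 = b then f k else 0) = ∑' a, f (a, b) := by
  rw [ENNReal.tsum_prod (f := fun a b' => if b' = b then f (a, b') else 0)]
  exact tsum_congr fun a => tsum_ite_eq b (fun b' => f (a, b'))

section Walk

variable {μ : ℤ × ℤ → ℝ}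

lemma tsum_killE_mul_add_tsum_axis (l : ℤ × ℤ) (f : ℤ × ℤ → ℝ≥0∞) :
    ∑' k, killE μ l k * f k + ∑' k₁ : ℤ, ENNReal.ofReal (μ ((k₁, 0) - l)) * f (k₁, 0) =
      ∑' k, ENNReal.ofReal (μ (k - l)) * f k := by
  rw [← ENNReal.tsum_ite_snd_eq (fun k => ENNReal.ofReal (μ (k - l)) * f k), ← ENNReal.tsum_add]
  congr 1 with k
  by_cases hk : k.2 = 0 <;> simp [killE, axisKillK, hk]

lemma tsum_ofReal_mul_weight_le_one (hnn : ∀ k, 0 ≤ μ k) {x y : ℝ} (hx : 0 < x) (hy : 0 < y)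
    (hg : genG μ x y ≤ 1) (hs : Summable fun k : ℤ × ℤ => μ k * x ^ k.1 * y ^ k.2) :
    ∑' m, ENNReal.ofReal (μ m) * ENNReal.ofReal (x ^ m.1 * y ^ m.2) ≤ 1 := by
  have hterm : ∀ m : ℤ × ℤ, 0 ≤ μ m * x ^ m.1 * y ^ m.2 := fun m => by
    have := hnn m; positivity
  calc ∑' m, ENNReal.ofReal (μ m) * ENNReal.ofReal (x ^ m.1 * y ^ m.2)
      = ENNReal.ofReal (genG μ x y) := by
        rw [genG, ENNReal.ofReal_tsum_of_nonneg hterm hs]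
        congr 1 with m
        rw [← ENNReal.ofReal_mul (hnn m), mul_assoc]
    _ ≤ 1 := ENNReal.ofReal_le_one.mpr hg

lemma tsum_ofReal_shift_mul_weight {x y : ℝ} (hx : 0 < x) (hy : 0 < y) (l : ℤ × ℤ) :
    ∑' k, ENNReal.ofReal (μ (k - l)) * ENNReal.ofReal (x ^ k.1 * y ^ k.2) =
      ENNReal.ofReal (x ^ l.1 * y ^ l.2) *
        ∑' m, ENNReal.ofReal (μ m) * ENNReal.ofReal (x ^ m.1 * y ^ m.2) := by
  rw [← ENNReal.tsum_mul_left, ← (Equiv.addLeft l).tsum_eq]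
  congr 1 with m
  have hw : x ^ (l + m).1 * y ^ (l + m).2 = x ^ l.1 * y ^ l.2 * (x ^ m.1 * y ^ m.2) := by
    simp only [Prod.fst_add, Prod.snd_add, zpow_add₀ hx.ne', zpow_add₀ hy.ne']
    ring
  simp only [Equiv.coe_addLeft, add_sub_cancel_left, hw]
  rw [ENNReal.ofReal_mul (by positivity)]
  ring

lemma killE_superharmonic (hnn : ∀ k, 0 ≤ μ k) {x y : ℝ} (hx : 0 < x) (hy : 0 < y)
    (hg : genG μ x y ≤ 1) (hs : Summable fun k : ℤ × ℤ => μ k * x ^ k.1 * y ^ k.2) (l : ℤ × ℤ) :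
    ∑' k, killE μ l k * ENNReal.ofReal (x ^ k.1 * y ^ k.2) +
        ∑' k₁ : ℤ, ENNReal.ofReal (μ ((k₁, 0) - l)) * ENNReal.ofReal (x ^ k₁) ≤
      ENNReal.ofReal (x ^ l.1 * y ^ l.2) := by
  have := tsum_killE_mul_add_tsum_axis (μ := μ) l fun k => ENNReal.ofReal (x ^ k.1 * y ^ k.2)
  simp only [zpow_zero, mul_one] at this
  rw [this, tsum_ofReal_shift_mul_weight hx hy]
  exact mul_le_of_le_one_right' (tsum_ofReal_mul_weight_le_one hnn hx hy hg hs)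

lemma tsum_hitE_mul_eq (j : ℤ × ℤ) (c : ℤ → ℝ≥0∞) :
    ∑' k₁, hitE μ j (k₁, 0) * c k₁ =
      ∑' n, ∑' l, iterE (killE μ) n j l * ∑' k₁, ENNReal.ofReal (μ ((k₁, 0) - l)) * c k₁ := by
  simp only [hitE, ← ENNReal.tsum_mul_right, ← ENNReal.tsum_mul_left, mul_assoc]
  rw [ENNReal.tsum_comm]
  exact tsum_congr fun n => ENNReal.tsum_comm

lemma tsum_hitE_mul_zpow_le (hnn : ∀ k, 0 ≤ μ k) {x y : ℝ} (hx : 0 < x) (hy : 0 < y)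
    (hg : genG μ x y ≤ 1) (hs : Summable fun k : ℤ × ℤ => μ k * x ^ k.1 * y ^ k.2) (j : ℤ × ℤ) :
    ∑' k₁, hitE μ j (k₁, 0) * ENNReal.ofReal (x ^ k₁) ≤ ENNReal.ofReal (x ^ j.1 * y ^ j.2) := by
  rw [tsum_hitE_mul_eq]
  exact tsum_tsum_iterE_mul_le_of_superharmonic (killE_superharmonic hnn hx hy hg hs) j

lemma genG_one_one (hprob : ∑' k : ℤ × ℤ, μ k = 1) : genG μ 1 1 = 1 := by
  simp [genG, hprob]

lemma summable_mul_one_zpow (hprob : ∑' k : ℤ × ℤ, μ k = 1) :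
    Summable fun k : ℤ × ℤ => μ k * 1 ^ k.1 * 1 ^ k.2 := by
  simp only [one_zpow, mul_one]
  by_contra h
  simp [tsum_eq_zero_of_not_summable h] at hprob

lemma tsum_killE_le_one (hnn : ∀ k, 0 ≤ μ k) (hprob : ∑' k : ℤ × ℤ, μ k = 1) (j : ℤ × ℤ) :
    ∑' k, killE μ j k ≤ 1 := by
  simpa using le_self_add.trans <| killE_superharmonic hnn one_pos one_pos
    (genG_one_one hprob).le (summable_mul_one_zpow hprob) j

lemma hitE_le_one (hnn : ∀ k, 0 ≤ μ k) (hprob : ∑' k : ℤ × ℤ, μ k = 1) (j : ℤ × ℤ) (k₁ : ℤ) :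
    hitE μ j (k₁, 0) ≤ 1 := by
  have := tsum_hitE_mul_zpow_le hnn one_pos one_pos
    (genG_one_one hprob).le (summable_mul_one_zpow hprob) j
  simp only [one_zpow, mul_one, ENNReal.ofReal_one] at this
  exact (ENNReal.le_tsum k₁).trans this

lemma hitCoeff_eq_toReal (hnn : ∀ k, 0 ≤ μ k) (hprob : ∑' k : ℤ × ℤ, μ k = 1) (k₁ : ℤ) :
    hitCoeff μ k₁ = (hitE μ (0, 1) (k₁, 0)).toReal := by
  have hiter := iterK_eq_toReal_iterE (p := axisKillK μ)
    (fun j k => by unfold axisKillK; split_ifs <;> simp [hnn]) (tsum_killE_le_one hnn hprob)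
  have hterm_ne_top : ∀ n l, iterE (killE μ) n (0, 1) l * ENNReal.ofReal (μ ((k₁, 0) - l)) ≠ ∞ :=
    fun n l => ENNReal.mul_ne_top (iterE_ne_top (tsum_killE_le_one hnn hprob) n _ l)
      ENNReal.ofReal_ne_top
  have hsum_ne_top : ∀ n,
      ∑' l, iterE (killE μ) n (0, 1) l * ENNReal.ofReal (μ ((k₁, 0) - l)) ≠ ∞ := fun n =>
    ne_top_of_le_ne_top ENNReal.one_ne_top ((ENNReal.le_tsum n).trans (hitE_le_one hnn hprob _ k₁))
  rw [hitE, ENNReal.tsum_toReal_eq hsum_ne_top, hitCoeff]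
  congr 1 with n
  rw [ENNReal.tsum_toReal_eq (hterm_ne_top n)]
  congr 1 with l
  rw [hiter, ENNReal.toReal_mul, ENNReal.toReal_ofReal (hnn _), homK]
  rfl

end Walk

section Positivity

variable {μ : ℤ × ℤ → ℝ}

lemma exists_steps_of_iterK_homK_pos (hnn : ∀ k, 0 ≤ μ k) {n : ℕ} {j k : ℤ × ℤ}
    (h : 0 < iterK (homK μ) n j k) : ∃ L : List (ℤ × ℤ), (∀ s ∈ L, 0 < μ s) ∧ L.sum = k - j := by
  induction n generalizing k with
  | zero =>
    refine ⟨[], by simp, ?_⟩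
    by_cases hjk : j = k
    · simp [hjk]
    · simp [iterK, hjk] at h
  | succ n ih =>
    obtain ⟨l, hl⟩ : ∃ l, 0 < iterK (homK μ) n j l * homK μ l k := by
      by_contra! hle
      exact (tsum_nonpos hle).not_gt h
    rcases mul_pos_iff.mp hl with ⟨hjl, hlk⟩ | ⟨_, hlk⟩
    · obtain ⟨L, hLpos, hLsum⟩ := ih hjl
      refine ⟨L ++ [k - l], fun s hs => ?_, by simp [hLsum]⟩
      rcases List.mem_append.mp hs with hs | hs
      · exact hLpos s hs
      · rwa [List.mem_singleton.mp hs]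
    · exact absurd (hnn _) hlk.not_ge

lemma ofReal_le_hitE (j k : ℤ × ℤ) : ENNReal.ofReal (μ (k - j)) ≤ hitE μ j k := by
  refine le_trans ?_ (ENNReal.le_tsum 0)
  simp [tsum_iterE_zero_mul (p := killE μ) j fun l => ENNReal.ofReal (μ (k - l))]

lemma killE_mul_hitE_le (j l k : ℤ × ℤ) : killE μ j l * hitE μ l k ≤ hitE μ j k := by
  calc killE μ j l * hitE μ l k
      = ∑' n, ∑' l', killE μ j l * iterE (killE μ) n l l' * ENNReal.ofReal (μ (k - l')) := by
        simp only [hitE, ← ENNReal.tsum_mul_left, mul_assoc]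
    _ ≤ ∑' n, ∑' l', iterE (killE μ) (n + 1) j l' * ENNReal.ofReal (μ (k - l')) := by
        gcongr with n l'
        exact mul_iterE_le_iterE_succ n j l l'
    _ ≤ hitE μ j k := ENNReal.tsum_comp_le_tsum_of_injective (add_left_injective 1) _

lemma killE_pos {s : ℤ × ℤ} (hs : 0 < μ s) {j : ℤ × ℤ} (hj : (j + s).2 ≠ 0) :
    0 < killE μ j (j + s) := by
  rw [Prod.snd_add] at hj
  simpa [killE, axisKillK, hj] using hs

lemma snd_sum_eq_neg_length {b : List (ℤ × ℤ)} (hb : ∀ s ∈ b, s.2 = -1) :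
    b.sum.2 = -b.length := by
  induction b with
  | nil => simp
  | cons s b ih =>
    simp only [List.mem_cons, forall_eq_or_imp] at hb
    simp [hb.1, ih hb.2]

lemma snd_sum_nonneg {a : List (ℤ × ℤ)} (ha : ∀ s ∈ a, 0 ≤ s.2) : 0 ≤ a.sum.2 := by
  induction a with
  | nil => simp
  | cons s a ih =>
    simp only [List.mem_cons, forall_eq_or_imp] at ha
    simpa using add_nonneg ha.1 (ih ha.2)

lemma hitE_pos_of_ascent {a : List (ℤ × ℤ)} (ha : ∀ s ∈ a, 0 < μ s ∧ 0 ≤ s.2) {j k : ℤ × ℤ}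
    (hj : 0 < j.2) (h : 0 < hitE μ (j + a.sum) k) : 0 < hitE μ j k := by
  induction a generalizing j with
  | nil => simpa using h
  | cons s a ih =>
    simp only [List.mem_cons, forall_eq_or_imp] at ha
    have hjs : 0 < (j + s).2 := by simpa using add_pos_of_pos_of_nonneg hj ha.1.2
    have h' : 0 < hitE μ (j + s) k := ih ha.2 hjs (by simpa [add_assoc] using h)
    exact (ENNReal.mul_pos (killE_pos ha.1.1 hjs.ne').ne' h'.ne').trans_le
      (killE_mul_hitE_le j (j + s) k)

lemma hitE_pos_of_descent {b : List (ℤ × ℤ)} (hb : ∀ s ∈ b, 0 < μ s ∧ s.2 = -1) :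
    ∀ {j : ℤ × ℤ}, j.2 = b.length → b ≠ [] → 0 < hitE μ j (j + b.sum) := by
  induction b with
  | nil => simp
  | cons s b ih =>
    intro j hj _
    simp only [List.mem_cons, forall_eq_or_imp] at hb
    rcases eq_or_ne b [] with rfl | hne
    · have := ofReal_le_hitE (μ := μ) j (j + s)
      rw [add_sub_cancel_left] at this
      simpa using (ENNReal.ofReal_pos.mpr hb.1.1).trans_le this
    · have hjs : (j + s).2 = b.length := by simp [hj, hb.1.2]
      have hlen : 0 < b.length := List.length_pos_iff.mpr hne
      have h' := ih hb.2 hjs hne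
      rw [List.sum_cons, ← add_assoc]
      exact (ENNReal.mul_pos (killE_pos hb.1.1 (by omega)).ne' h'.ne').trans_le
        (killE_mul_hitE_le j (j + s) _)

lemma hitE_pos (hnn : ∀ k, 0 ≤ μ k) (hsupp : ∀ k : ℤ × ℤ, k.2 < -1 → μ k = 0)
    (hirr : ∀ j k : ℤ × ℤ, ∃ n, 0 < iterK (homK μ) n j k) {j k : ℤ × ℤ} (hj : 0 < j.2)
    (hk : k.2 = 0) : 0 < hitE μ j k := by
  obtain ⟨n, hn⟩ := hirr j k
  obtain ⟨L, hLpos, hLsum⟩ := exists_steps_of_iterK_homK_pos hnn hn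
  set a := L.filter fun s => 0 ≤ s.2
  set b := L.filter fun s => ¬ 0 ≤ s.2
  have ha : ∀ s ∈ a, 0 < μ s ∧ 0 ≤ s.2 := fun s hs => by
    simp only [a, List.mem_filter, decide_eq_true_eq] at hs
    exact ⟨hLpos s hs.1, hs.2⟩
  have hb : ∀ s ∈ b, 0 < μ s ∧ s.2 = -1 := fun s hs => by
    simp only [b, List.mem_filter, decide_eq_true_eq] at hs
    have hμ := hLpos s hs.1
    have : ¬ s.2 < -1 := fun h => hμ.ne' (hsupp s h)
    exact ⟨hμ, by omega⟩
  have hab : a.sum + b.sum = k - j := by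
    simpa [a, b] using (List.sum_map_filter_add_sum_map_filter_not (fun s => 0 ≤ s.2) id L).trans
      (by simpa using hLsum)
  have hsnd := congrArg Prod.snd hab
  have hbsum := snd_sum_eq_neg_length fun s hs => (hb s hs).2
  have hasum := snd_sum_nonneg fun s hs => (ha s hs).2
  simp only [Prod.snd_add, Prod.snd_sub, hk] at hsnd
  have hjunction : (j + a.sum).2 = b.length := by simp only [Prod.snd_add]; omega
  have hb_ne : b ≠ [] := by
    rintro hnil
    simp [hnil] at hbsum hjunction
    omega
  refine hitE_pos_of_ascent ha hj ?_
  convert hitE_pos_of_descent hb hjunction hb_ne using 2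
  rw [add_assoc, hab]
  abel

end Positivity

lemma StrictConvexOn.const_mul {E : Type*} [AddCommMonoid E] [SMul ℝ E] {s : Set E} {f : E → ℝ}
    {c : ℝ} (hc : 0 < c) (hf : StrictConvexOn ℝ s f) : StrictConvexOn ℝ s fun x => c * f x := by
  refine ⟨hf.1, fun x hx y hy hxy a b ha hb hab => ?_⟩
  have := mul_lt_mul_of_pos_left (hf.2 hx hy hxy ha hb hab) hc
  simp only [smul_eq_mul] at this ⊢
  linarith

lemma strictConvexOn_tsum {ι E : Type*} [AddCommMonoid E] [SMul ℝ E] {s : Set E}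
    {f : ι → E → ℝ} (hf : ∀ i, ConvexOn ℝ s (f i)) {i₀ : ι} (hi₀ : StrictConvexOn ℝ s (f i₀))
    (hsum : ∀ x ∈ s, Summable fun i => f i x) : StrictConvexOn ℝ s fun x => ∑' i, f i x := by
  refine ⟨hi₀.1, fun x hx y hy hxy a b ha hb hab => ?_⟩
  calc ∑' i, f i (a • x + b • y) < ∑' i, (a • f i x + b • f i y) :=
        Summable.tsum_lt_tsum (fun i => (hf i).2 hx hy ha.le hb.le hab)
          (hi₀.2 hx hy hxy ha hb hab) (hsum _ (hi₀.1 hx hy ha.le hb.le hab))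
          (((hsum x hx).const_smul a).add ((hsum y hy).const_smul b))
    _ = a • ∑' i, f i x + b • ∑' i, f i y := by
        rw [Summable.tsum_add ((hsum x hx).const_smul a) ((hsum y hy).const_smul b),
          tsum_const_smul'', tsum_const_smul'']

lemma strictConvexOn_tsum_mul_zpow {c : ℤ → ℝ} (hc : ∀ k, 0 < c k) {s : Set ℝ}
    (hs : s ⊆ Set.Ioi 0) (hconv : Convex ℝ s) (hsum : ∀ x ∈ s, Summable fun k => c k * x ^ k) :
    StrictConvexOn ℝ s fun x => ∑' k : ℤ, c k * x ^ k :=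
  strictConvexOn_tsum (i₀ := 2)
    (fun k => (((convexOn_zpow k).subset hs hconv).smul (hc k).le))
    (((strictConvexOn_zpow (by norm_num) (by norm_num)).subset hs hconv).const_mul (hc 2)) hsum

lemma summable_hitCoeff_mul_zpow {μ : ℤ × ℤ → ℝ} (hnn : ∀ k, 0 ≤ μ k)
    (hprob : ∑' k : ℤ × ℤ, μ k = 1) {x y : ℝ} (hx : 0 < x) (hy : 0 < y) (hg : genG μ x y ≤ 1)
    (hs : Summable fun k : ℤ × ℤ => μ k * x ^ k.1 * y ^ k.2) :
    Summable fun k₁ => hitCoeff μ k₁ * x ^ k₁ := by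
  have hbound := tsum_hitE_mul_zpow_le hnn hx hy hg hs (0, 1)
  refine (ENNReal.summable_toReal (ne_top_of_le_ne_top ENNReal.ofReal_ne_top hbound)).congr
    fun k₁ => ?_
  rw [ENNReal.toReal_mul, ENNReal.toReal_ofReal (zpow_nonneg hx.le _), hitCoeff_eq_toReal hnn hprob]

theorem Y1_coefficients_positive_and_strictly_convex_general
    (μ : ℤ × ℤ → ℝ)
    (hnn : ∀ k, 0 ≤ μ k) (hprob : ∑' k : ℤ × ℤ, μ k = 1)
    (hsupp : ∀ k : ℤ × ℤ, k.2 < -1 → μ k = 0)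
    (hirr : ∀ j k : ℤ × ℤ, ∃ n, 0 < iterK (homK μ) n j k)
    (hfin : ∃ U : Set (ℝ × ℝ), IsOpen U ∧
      {q : ℝ × ℝ | 0 < q.1 ∧ 0 < q.2 ∧ genG μ q.1 q.2 ≤ 1} ⊆ U ∧
      ∀ q ∈ U, Summable (fun k : ℤ × ℤ => μ k * q.1 ^ k.1 * q.2 ^ k.2))
    (xsP xssP : ℝ)
    (hproj : {x : ℝ | 0 < x ∧ ∃ y : ℝ, 0 < y ∧ genG μ x y ≤ 1} = Set.Icc xsP xssP) :
    (∀ k₁ : ℤ, 0 < hitCoeff μ k₁) ∧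
    StrictConvexOn ℝ (Set.Icc xsP xssP) (fun x => ∑' k₁ : ℤ, hitCoeff μ k₁ * x ^ k₁) := by
  have hpos : ∀ k₁, 0 < hitCoeff μ k₁ := fun k₁ => by
    rw [hitCoeff_eq_toReal hnn hprob]
    exact ENNReal.toReal_pos (hitE_pos hnn hsupp hirr one_pos rfl).ne'
      (ne_top_of_le_ne_top ENNReal.one_ne_top (hitE_le_one hnn hprob _ k₁))
  obtain ⟨U, -, hDU, hUsum⟩ := hfin
  have hIcc : ∀ x ∈ Set.Icc xsP xssP, 0 < x ∧ ∃ y, 0 < y ∧ genG μ x y ≤ 1 := by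
    rw [← hproj]
    exact fun x hx => hx
  refine ⟨hpos, strictConvexOn_tsum_mul_zpow hpos (fun x hx => (hIcc x hx).1) (convex_Icc _ _)
    fun x hx => ?_⟩
  obtain ⟨hx, y, hy, hg⟩ := hIcc x hx
  exact summable_hitCoeff_mul_zpow hnn hprob hx hy hg (hUsum (x, y) (hDU ⟨hx, hy, hg⟩))

/-- All Laurent coefficients `P_{(0,1)}(S(τ₁)=(k₁,0), τ₁<∞)` of
`Y₁(x) = E_{(0,1)}[x^{S₁(τ₁)} ; τ₁ < ∞]` are strictly positive, and consequently `Y₁`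
is strictly convex on `[x*_P, x**_P]`. -/
theorem Y1_coefficients_positive_and_strictly_convex
    (μ : ℤ × ℤ → ℝ)
    (hnn : ∀ k, 0 ≤ μ k) (hprob : ∑' k : ℤ × ℤ, μ k = 1)
    (hsupp : ∀ k : ℤ × ℤ, k.2 < -1 → μ k = 0)
    (hirr : ∀ j k : ℤ × ℤ, ∃ n, 0 < iterK (homK μ) n j k)
    (hcpt : IsCompact {q : ℝ × ℝ | 0 < q.1 ∧ 0 < q.2 ∧ genG μ q.1 q.2 ≤ 1})
    (hint : (interior {q : ℝ × ℝ | 0 < q.1 ∧ 0 < q.2 ∧ genG μ q.1 q.2 ≤ 1}).Nonempty)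
    (hfin : ∃ U : Set (ℝ × ℝ), IsOpen U ∧
      {q : ℝ × ℝ | 0 < q.1 ∧ 0 < q.2 ∧ genG μ q.1 q.2 ≤ 1} ⊆ U ∧
      ∀ q ∈ U, Summable (fun k : ℤ × ℤ => μ k * q.1 ^ k.1 * q.2 ^ k.2))
    (xsP xssP : ℝ) (hlt : xsP < xssP)
    (hproj : {x : ℝ | 0 < x ∧ ∃ y : ℝ, 0 < y ∧ genG μ x y ≤ 1} = Set.Icc xsP xssP) :
    (∀ k₁ : ℤ, 0 < hitCoeff μ k₁) ∧
    StrictConvexOn ℝ (Set.Icc xsP xssP) (fun x => ∑' k₁ : ℤ, hitCoeff μ k₁ * x ^ k₁) :=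
  Y1_coefficients_positive_and_strictly_convex_general μ hnn hprob hsupp hirr hfin xsP xssP hproj
end

section
/- Let (Z(n)) be an irreducible Markov chain on Z_+^2 (with μ_0, μ_1, μ_2 stochastic) that is transient, and suppose that for the Green functions g of the chain killed at 0 there exists a function κ with κ(0) > 0 such that lim_{‖k‖→∞} g(j,k)/g(0,k) = κ(j)/κ(0) for all j, and that the only nonnegative harmonic functions of (Z(n)) are (up to constants) the constants. Then P_0(τ_0 = ∞)·(κ(j)/κ(0)) + P_j(τ_0 < ∞) = 1 for every j ∈ Z_+^2, and consequently lim_{‖k‖→∞} G(j,k)/G(0,k) = 1 for all j. -/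
/-!
Splitting paths at their first visit to the origin gives `G(j,k) = g(j,k) + P_j(τ₀<∞) G(0,k)`,
and in particular `g(0,k) = P₀(τ₀=∞) G(0,k)`; hence `G(j,k)/G(0,k)` converges to
`P₀(τ₀=∞) κ(j)/κ(0) + P_j(τ₀<∞)`, and it remains to show that any limit `L` at infinity of the
Martin kernel `G(x,·)/G(0,·)` equals `1`.

For a finite set `E` let `e_E(y)` be the probability of never being in `E` at a positive time.
Splitting paths at their last visit to `E` gives `∑_{y∈E} G(x,y) e_E(y) = 1` for every `x ∈ E`.
Thus, once `0, x ∈ E`, the weights `G(0,y) e_E(y)` form a probability on `E` against which the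
Martin kernel averages to `1`. Since `e_E(y) ≤ P_y(Z(1) ∉ E)`, these weights leave every finite
set as `E` grows, and since the Martin kernel is bounded (by irreducibility), the averages tend
to `L`.
-/

open Filter

/-- One-step kernel of the chain killed at the origin `(0,0)`. -/
noncomputable def killK (p : ℕ × ℕ → ℕ × ℕ → ℝ) : ℕ × ℕ → ℕ × ℕ → ℝ :=
  fun j k => if k = (0, 0) then 0 else p j k

/-- Green function `G(j,k)`. -/
noncomputable def GreenG (p : ℕ × ℕ → ℕ × ℕ → ℝ) (j k : ℕ × ℕ) : ℝ :=
  ∑' n : ℕ, iterK p n j k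

/-- Green function `g(j,k)` of the chain killed at the origin. -/
noncomputable def Greeng (p : ℕ × ℕ → ℕ × ℕ → ℝ) (j k : ℕ × ℕ) : ℝ :=
  ∑' n : ℕ, iterK (killK p) n j k

/-- `P_j(τ₀ < ∞)`, the probability of hitting the origin at a time `≥ 1`. -/
noncomputable def hitProb (p : ℕ × ℕ → ℕ × ℕ → ℝ) (j : ℕ × ℕ) : ℝ :=
  ∑' n : ℕ, ∑' l : ℕ × ℕ, iterK (killK p) n j l * p l (0, 0)

open Topology Finset

theorem Summable.mul_of_abs_le {ι : Type*} {a f : ι → ℝ} {C : ℝ} (ha : Summable a)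
    (hf : ∀ i, |f i| ≤ C) : Summable fun i => a i * f i :=
  .of_norm_bounded (ha.abs.mul_right C) fun i => by
    rw [Real.norm_eq_abs, abs_mul]
    exact mul_le_mul_of_nonneg_left (hf i) (abs_nonneg _)

structure IsSubstochastic {S : Type*} (q : S → S → ℝ) : Prop where
  nonneg : ∀ j k, 0 ≤ q j k
  summable : ∀ j, Summable (q j)
  tsum_le_one : ∀ j, ∑' k, q j k ≤ 1

namespace IsSubstochastic

variable {S : Type*} {q : S → S → ℝ}

theorem of_tsum_eq_one (hnn : ∀ j k, 0 ≤ q j k) (hrow : ∀ j, ∑' k, q j k = 1) :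
    IsSubstochastic q where
  nonneg := hnn
  summable j := by
    by_contra h
    simpa [tsum_eq_zero_of_not_summable h] using hrow j
  tsum_le_one j := (hrow j).le

theorem le_one (hq : IsSubstochastic q) (j k : S) : q j k ≤ 1 :=
  ((hq.summable j).le_tsum k fun l _ => hq.nonneg j l).trans (hq.tsum_le_one j)

theorem abs_le_one (hq : IsSubstochastic q) (j k : S) : |q j k| ≤ 1 :=
  abs_le.2 ⟨by linarith [hq.nonneg j k], hq.le_one j k⟩

theorem of_le {r : S → S → ℝ} (hq : IsSubstochastic q) (hr : ∀ j k, 0 ≤ r j k)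
    (hle : ∀ j k, r j k ≤ q j k) : IsSubstochastic r := by
  have hs : ∀ j, Summable (r j) := fun j => (hq.summable j).of_nonneg_of_le (hr j) (hle j)
  exact ⟨hr, hs, fun j => ((hs j).tsum_le_tsum (hle j) (hq.summable j)).trans (hq.tsum_le_one j)⟩

section Tonelli

variable (hq : IsSubstochastic q) {a f : S → ℝ} (ha : Summable a) (ha0 : ∀ r, 0 ≤ a r)
  (hf0 : ∀ l, 0 ≤ f l) (hf1 : ∀ l, f l ≤ 1)
include hq ha ha0 hf0 hf1

theorem summable_uncurry_mul : Summable (Function.uncurry fun r l => a r * q r l * f l) := by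
  have hf : ∀ l, |f l| ≤ 1 := fun l => abs_le.2 ⟨by linarith [hf0 l], hf1 l⟩
  refine (summable_prod_of_nonneg fun x =>
    mul_nonneg (mul_nonneg (ha0 x.1) (hq.nonneg x.1 x.2)) (hf0 x.2)).2 ⟨fun r => ?_, ?_⟩
  · exact (((hq.summable r).mul_of_abs_le hf).mul_left (a r)).congr fun l => by ring
  refine .of_nonneg_of_le (fun r => tsum_nonneg fun l => ?_) (fun r => ?_) ha
  · exact mul_nonneg (mul_nonneg (ha0 r) (hq.nonneg r l)) (hf0 l)
  calc ∑' l, a r * q r l * f l = a r * ∑' l, q r l * f l := by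
        rw [← tsum_mul_left]; exact tsum_congr fun l => by ring
    _ ≤ a r * ∑' l, q r l := by
        refine mul_le_mul_of_nonneg_left ?_ (ha0 r)
        exact ((hq.summable r).mul_of_abs_le hf).tsum_le_tsum
          (fun l => mul_le_of_le_one_right (hq.nonneg r l) (hf1 l)) (hq.summable r)
    _ ≤ a r := mul_le_of_le_one_right (ha0 r) (hq.tsum_le_one r)

theorem tsum_tsum_mul_assoc :
    ∑' l, (∑' r, a r * q r l) * f l = ∑' r, a r * ∑' l, q r l * f l :=
  calc ∑' l, (∑' r, a r * q r l) * f l = ∑' l, ∑' r, a r * q r l * f l :=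
        tsum_congr fun l => tsum_mul_right.symm
    _ = ∑' r, ∑' l, a r * q r l * f l := (hq.summable_uncurry_mul ha ha0 hf0 hf1).tsum_comm
    _ = ∑' r, a r * ∑' l, q r l * f l := tsum_congr fun r => by
        rw [← tsum_mul_left]; exact tsum_congr fun l => by ring

end Tonelli

theorem summable_tsum_mul (hq : IsSubstochastic q) {a : S → ℝ} (ha : Summable a)
    (ha0 : ∀ r, 0 ≤ a r) : Summable fun l => ∑' r, a r * q r l := by
  simpa using (hq.summable_uncurry_mul ha ha0 (fun _ => zero_le_one) fun _ => le_rfl).prod_symm.prod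

theorem tsum_tsum_mul_le (hq : IsSubstochastic q) {a : S → ℝ} (ha : Summable a)
    (ha0 : ∀ r, 0 ≤ a r) : ∑' l, ∑' r, a r * q r l ≤ ∑' r, a r := by
  have := hq.tsum_tsum_mul_assoc ha ha0 (f := fun _ => 1) (fun _ => zero_le_one) fun _ => le_rfl
  simp only [mul_one] at this
  rw [this]
  refine Summable.tsum_le_tsum (fun r => mul_le_of_le_one_right (ha0 r) (hq.tsum_le_one r))
    (ha.mul_of_abs_le (C := 1) fun r => ?_) ha
  rw [abs_of_nonneg (tsum_nonneg (hq.nonneg r))]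
  exact hq.tsum_le_one r

variable [DecidableEq S]

theorem iterK (hq : IsSubstochastic q) (n : ℕ) : IsSubstochastic (_root_.iterK q n) := by
  induction n with
  | zero =>
    refine ⟨fun j k => by simp only [_root_.iterK]; positivity, fun j => ?_, fun j => ?_⟩
    · exact (hasSum_ite_eq j (1 : ℝ)).summable.congr fun k => by simp [_root_.iterK, eq_comm]
    · simp [_root_.iterK]
  | succ n ih =>
    refine ⟨fun j k => tsum_nonneg fun l => mul_nonneg (ih.nonneg j l) (hq.nonneg l k),
      fun j => hq.summable_tsum_mul (ih.summable j) (ih.nonneg j),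
      fun j => (hq.tsum_tsum_mul_le (ih.summable j) (ih.nonneg j)).trans (ih.tsum_le_one j)⟩

end IsSubstochastic

section iterK

variable {S : Type*} [DecidableEq S] {q : S → S → ℝ}

theorem iterK_zero (j k : S) : iterK q 0 j k = if j = k then 1 else 0 := rfl

theorem iterK_succ (n : ℕ) (j k : S) : iterK q (n + 1) j k = ∑' l, iterK q n j l * q l k := rfl

theorem iterK_one (j k : S) : iterK q 1 j k = q j k := by
  simp [iterK_succ, iterK_zero]

theorem iterK_add (hq : IsSubstochastic q) (m n : ℕ) (j k : S) :
    iterK q (m + n) j k = ∑' l, iterK q m j l * iterK q n l k := by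
  induction n generalizing k with
  | zero => simp [iterK_zero]
  | succ n ih =>
    have hqm := hq.iterK m
    calc iterK q (m + n + 1) j k = ∑' l, (∑' r, iterK q m j r * iterK q n r l) * q l k := by
          rw [iterK_succ]; simp only [ih]
      _ = ∑' r, iterK q m j r * iterK q (n + 1) r k :=
          (hq.iterK n).tsum_tsum_mul_assoc (hqm.summable j) (hqm.nonneg j)
            (fun l => hq.nonneg l k) fun l => hq.le_one l k

theorem iterK_succ_left (hq : IsSubstochastic q) (n : ℕ) (j k : S) :
    iterK q (n + 1) j k = ∑' l, q j l * iterK q n l k := by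
  rw [add_comm, iterK_add hq]; simp only [iterK_one]

theorem iterK_mul_iterK_le (hq : IsSubstochastic q) (m n : ℕ) (j x k : S) :
    iterK q m j x * iterK q n x k ≤ iterK q (m + n) j k := by
  rw [iterK_add hq]
  exact (((hq.iterK m).summable j).mul_of_abs_le fun l => (hq.iterK n).abs_le_one l k).le_tsum x
    fun l _ => mul_nonneg ((hq.iterK m).nonneg j l) ((hq.iterK n).nonneg l k)

end iterK

section Green

variable {S : Type*} [DecidableEq S] {q : S → S → ℝ}

noncomputable def green (q : S → S → ℝ) (j k : S) : ℝ :=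
  ∑' n, iterK q n j k

theorem green_nonneg (hq : IsSubstochastic q) (j k : S) : 0 ≤ green q j k :=
  tsum_nonneg fun n => (hq.iterK n).nonneg j k

theorem green_pos (hq : IsSubstochastic q) (htrans : ∀ j k, Summable fun n => iterK q n j k)
    {j k : S} {n : ℕ} (hn : 0 < iterK q n j k) : 0 < green q j k :=
  (htrans j k).tsum_pos (fun m => (hq.iterK m).nonneg j k) n hn

theorem iterK_mul_green_le (hq : IsSubstochastic q)
    (htrans : ∀ j k, Summable fun n => iterK q n j k) (m : ℕ) (j x k : S) :
    iterK q m j x * green q x k ≤ green q j k := by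
  have hshift : Summable fun n => iterK q (m + n) j k :=
    (htrans j k).comp_injective (add_right_injective m)
  calc iterK q m j x * green q x k = ∑' n, iterK q m j x * iterK q n x k := tsum_mul_left.symm
    _ ≤ ∑' n, iterK q (m + n) j k :=
        ((htrans x k).mul_left _).tsum_le_tsum (fun n => iterK_mul_iterK_le hq m n j x k) hshift
    _ ≤ green q j k :=
        hshift.tsum_le_tsum_of_inj _ (add_right_injective m)
          (fun n _ => (hq.iterK n).nonneg j k) (fun _ => le_rfl) (htrans j k)

end Green

section LastExit

variable {S : Type*} [DecidableEq S] {q : S → S → ℝ}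

/-- The probability that the chain started at `x` avoids `E` at the times `1, …, n`. -/
noncomputable def avoidProb (q : S → S → ℝ) (E : Finset S) : ℕ → S → ℝ
  | 0 => fun _ => 1
  | n + 1 => fun x => ∑' y, q x y * if y ∈ E then 0 else avoidProb q E n y

noncomputable def escapeProb (q : S → S → ℝ) (E : Finset S) (x : S) : ℝ :=
  ⨅ n, avoidProb q E n x

variable {E : Finset S}

theorem avoidProb_zero (x : S) : avoidProb q E 0 x = 1 := rfl

theorem avoidProb_succ (n : ℕ) (x : S) :
    avoidProb q E (n + 1) x = ∑' y, q x y * if y ∈ E then 0 else avoidProb q E n y := rfl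

theorem avoidProb_mem_Icc (hq : IsSubstochastic q) (n : ℕ) (x : S) :
    avoidProb q E n x ∈ Set.Icc 0 1 := by
  induction n generalizing x with
  | zero => simp [avoidProb_zero]
  | succ n ih =>
    have hy : ∀ y, (if y ∈ E then 0 else avoidProb q E n y) ∈ Set.Icc (0 : ℝ) 1 := fun y => by
      split_ifs
      · simp
      · exact ih y
    have hsum := (hq.summable x).mul_of_abs_le fun y => abs_le.2 ⟨by linarith [(hy y).1], (hy y).2⟩
    refine ⟨tsum_nonneg fun y => mul_nonneg (hq.nonneg x y) (hy y).1, ?_⟩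
    refine (hsum.tsum_le_tsum (fun y => ?_) (hq.summable x)).trans (hq.tsum_le_one x)
    exact mul_le_of_le_one_right (hq.nonneg x y) (hy y).2

theorem abs_ite_avoidProb_le_one (hq : IsSubstochastic q) (n : ℕ) (y : S) :
    |(if y ∈ E then 0 else avoidProb q E n y)| ≤ 1 := by
  split_ifs
  · simp
  · obtain ⟨h0, h1⟩ := avoidProb_mem_Icc hq (E := E) n y
    exact abs_le.2 ⟨by linarith, h1⟩

theorem avoidProb_succ_le (hq : IsSubstochastic q) (n : ℕ) (x : S) :
    avoidProb q E (n + 1) x ≤ avoidProb q E n x := by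
  induction n generalizing x with
  | zero => exact (avoidProb_mem_Icc hq 1 x).2
  | succ n ih =>
    have hsum := fun m => (hq.summable x).mul_of_abs_le (abs_ite_avoidProb_le_one hq (E := E) m)
    refine (hsum _).tsum_le_tsum (fun y => ?_) (hsum _)
    refine mul_le_mul_of_nonneg_left ?_ (hq.nonneg x y)
    split_ifs
    · exact le_rfl
    · exact ih y

theorem bddBelow_range_avoidProb (hq : IsSubstochastic q) (x : S) :
    BddBelow (Set.range (avoidProb q E · x)) :=
  ⟨0, Set.forall_mem_range.2 fun n => (avoidProb_mem_Icc hq n x).1⟩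

theorem tendsto_avoidProb (hq : IsSubstochastic q) (x : S) :
    Tendsto (avoidProb q E · x) atTop (𝓝 (escapeProb q E x)) :=
  tendsto_atTop_ciInf (antitone_nat_of_succ_le fun n => avoidProb_succ_le hq n x)
    (bddBelow_range_avoidProb hq x)

theorem escapeProb_nonneg (hq : IsSubstochastic q) (x : S) : 0 ≤ escapeProb q E x :=
  Real.iInf_nonneg fun n => (avoidProb_mem_Icc hq n x).1

theorem escapeProb_le_one_sub (hq : IsSubstochastic q) (hrow : ∀ j, ∑' k, q j k = 1) (x : S) :
    escapeProb q E x ≤ 1 - ∑ y ∈ E, q x y := by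
  have hE : Summable fun y => if y ∈ E then q x y else 0 :=
    (hasSum_sum_of_ne_finset_zero fun y hy => if_neg hy).summable
  calc escapeProb q E x ≤ avoidProb q E 1 x := ciInf_le (bddBelow_range_avoidProb hq x) 1
    _ = ∑' y, q x y - ∑' y, if y ∈ E then q x y else 0 := by
        rw [← (hq.summable x).tsum_sub hE]
        exact tsum_congr fun y => by split_ifs <;> simp [avoidProb_zero]
    _ = 1 - ∑ y ∈ E, q x y := by
        rw [hrow, tsum_eq_sum fun y hy => if_neg hy, Finset.sum_ite_mem, Finset.inter_self]

theorem tendsto_escapeProb_atTop (hq : IsSubstochastic q) (hrow : ∀ j, ∑' k, q j k = 1) (x : S) :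
    Tendsto (fun E => escapeProb q E x) atTop (𝓝 0) := by
  have h : Tendsto (fun E : Finset S => 1 - ∑ y ∈ E, q x y) atTop (𝓝 0) := by
    have hsum : Tendsto (fun E : Finset S => ∑ y ∈ E, q x y) atTop (𝓝 1) :=
      hrow x ▸ (hq.summable x).hasSum
    simpa using (tendsto_const_nhds (x := (1 : ℝ))).sub hsum
  exact squeeze_zero (fun E => escapeProb_nonneg hq x) (fun E => escapeProb_le_one_sub hq hrow x) h

/-- Last-exit decomposition of the paths of length `n`: either they avoid `E` at all times
`0, …, n`, or they are split at their last visit to `E`, at some time `a ≤ n`. -/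
theorem lastExit_decomposition (hq : IsSubstochastic q) (hrow : ∀ j, ∑' k, q j k = 1)
    (n : ℕ) (x : S) :
    (if x ∈ E then 0 else avoidProb q E n x) +
      ∑ ab ∈ antidiagonal n, ∑ y ∈ E, iterK q ab.1 x y * avoidProb q E ab.2 y = 1 := by
  induction n generalizing x with
  | zero => by_cases hx : x ∈ E <;> simp [hx, iterK_zero, avoidProb_zero]
  | succ n ih =>
    have hfirst : ∑ y ∈ E, iterK q 0 x y * avoidProb q E (n + 1) y =
        if x ∈ E then avoidProb q E (n + 1) x else 0 := by
      simp [iterK_zero]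
    have hsummable : ∀ a b y, Summable fun l => q x l * (iterK q a l y * avoidProb q E b y) :=
      fun a b y => (hq.summable x).mul_of_abs_le fun l => by
        obtain ⟨h0, h1⟩ := avoidProb_mem_Icc hq (E := E) b y
        rw [abs_mul, abs_of_nonneg h0]
        exact mul_le_one₀ ((hq.iterK a).abs_le_one l y) h0 h1
    have hrest : ∑ ab ∈ antidiagonal n, ∑ y ∈ E,
          iterK q (ab.1 + 1) x y * avoidProb q E ab.2 y =
        1 - avoidProb q E (n + 1) x := by
      calc _ = ∑ ab ∈ antidiagonal n, ∑ y ∈ E,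
            ∑' l, q x l * (iterK q ab.1 l y * avoidProb q E ab.2 y) := by
            simp_rw [iterK_succ_left hq, ← tsum_mul_right, mul_assoc]
        _ = ∑' l, q x l * ∑ ab ∈ antidiagonal n, ∑ y ∈ E,
            iterK q ab.1 l y * avoidProb q E ab.2 y := by
            simp_rw [Finset.mul_sum]
            rw [Summable.tsum_finsetSum fun ab _ => summable_sum fun y _ => hsummable _ _ _]
            refine Finset.sum_congr rfl fun ab _ => ?_
            rw [Summable.tsum_finsetSum fun y _ => hsummable _ _ _]
        _ = ∑' l, (q x l - q x l * if l ∈ E then 0 else avoidProb q E n l) := by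
            refine tsum_congr fun l => ?_
            rw [eq_sub_of_add_eq' (ih l)]
            ring
        _ = 1 - avoidProb q E (n + 1) x := by
            rw [(hq.summable x).tsum_sub
              ((hq.summable x).mul_of_abs_le (abs_ite_avoidProb_le_one hq n)), hrow, avoidProb_succ]
    rw [Nat.sum_antidiagonal_succ, hfirst, hrest]
    split_ifs <;> ring

theorem sum_green_mul_escapeProb (hq : IsSubstochastic q) (hrow : ∀ j, ∑' k, q j k = 1)
    (htrans : ∀ j k, Summable fun n => iterK q n j k) {x : S} (hx : x ∈ E) :
    ∑ y ∈ E, green q x y * escapeProb q E y = 1 := by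
  let f : ℕ → ℕ → ℝ := fun n m =>
    if m ≤ n then ∑ y ∈ E, iterK q m x y * avoidProb q E (n - m) y else 0
  have hf : ∀ n, ∑' m, f n m = 1 := fun n => by
    rw [tsum_eq_sum (s := range (n + 1)) fun m hm => if_neg (by simpa using hm),
      ← lastExit_decomposition hq hrow n x, if_pos hx, zero_add,
      Nat.sum_antidiagonal_eq_sum_range_succ fun a b => ∑ y ∈ E, iterK q a x y * avoidProb q E b y]
    exact sum_congr rfl fun m hm => if_pos (by simpa [Nat.lt_succ_iff] using hm)
  have hlim : ∀ m, Tendsto (f · m) atTop (𝓝 (∑ y ∈ E, iterK q m x y * escapeProb q E y)) := by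
    intro m
    refine Tendsto.congr' (eventually_atTop.2 ⟨m, fun n hn => (if_pos hn).symm⟩) ?_
    exact tendsto_finsetSum _ fun y _ =>
      ((tendsto_avoidProb hq y).comp (tendsto_sub_atTop_nat m)).const_mul _
  have hbound : ∀ n m, ‖f n m‖ ≤ ∑ y ∈ E, iterK q m x y := fun n m => by
    have hnonneg := fun y => (hq.iterK m).nonneg x y
    by_cases hm : m ≤ n
    · rw [show f n m = _ from if_pos hm, Real.norm_of_nonneg (sum_nonneg fun y _ =>
        mul_nonneg (hnonneg y) (avoidProb_mem_Icc hq _ y).1)]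
      exact sum_le_sum fun y _ =>
        mul_le_of_le_one_right (hnonneg y) (avoidProb_mem_Icc hq _ y).2
    · simpa [f, hm] using sum_nonneg fun y _ => hnonneg y
  have := tendsto_tsum_of_dominated_convergence (summable_sum fun y _ => htrans x y) hlim
    (.of_forall hbound)
  simp only [hf] at this
  rw [tendsto_const_nhds_iff.1 this, Summable.tsum_finsetSum fun y _ => (htrans x y).mul_right _]
  exact sum_congr rfl fun y _ => tsum_mul_right.symm

end LastExit

theorem tendsto_sum_mul_of_tendsto_cofinite {ι α : Type*} {l : Filter ι} {K : α → ℝ} {L C : ℝ}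
    (hK : Tendsto K cofinite (𝓝 L)) (hKC : ∀ y, |K y| ≤ C) {E : ι → Finset α}
    {c : ι → α → ℝ} (hc : ∀ i y, 0 ≤ c i y) (hc1 : ∀ᶠ i in l, ∑ y ∈ E i, c i y = 1)
    (hc0 : ∀ y, Tendsto (c · y) l (𝓝 0)) :
    Tendsto (fun i => ∑ y ∈ E i, c i y * K y) l (𝓝 L) := by
  classical
  rw [Metric.tendsto_nhds]
  intro ε hε
  have hfar : {y | ¬ |K y - L| < ε / 2}.Finite := by
    simpa [Real.dist_eq] using
      eventually_cofinite.1 (Metric.tendsto_nhds.1 hK (ε / 2) (half_pos hε))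
  set F := hfar.toFinset
  have hF : Tendsto (fun i => (|C| + |L|) * ∑ y ∈ F, c i y) l (𝓝 0) := by
    simpa using (tendsto_finsetSum F fun y _ => hc0 y).const_mul (|C| + |L|)
  filter_upwards [hc1, hF.eventually (gt_mem_nhds (half_pos hε))] with i hi hsmall
  have hpoint : ∀ y,
      c i y * |K y - L| ≤ ε / 2 * c i y + (|C| + |L|) * if y ∈ F then c i y else 0 := by
    intro y
    split_ifs with hy
    · have : |K y - L| ≤ |C| + |L| := (abs_sub _ _).trans (by linarith [hKC y, le_abs_self C])
      nlinarith [hc i y, hε]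
    · have : |K y - L| < ε / 2 := by simpa [F] using hy
      nlinarith [hc i y]
  calc dist (∑ y ∈ E i, c i y * K y) L = |∑ y ∈ E i, c i y * (K y - L)| := by
        simp only [mul_sub, sum_sub_distrib, ← sum_mul, hi, one_mul, Real.dist_eq]
    _ ≤ ∑ y ∈ E i, c i y * |K y - L| := by
        refine (abs_sum_le_sum_abs _ _).trans_eq (sum_congr rfl fun y _ => ?_)
        rw [abs_mul, abs_of_nonneg (hc i y)]
    _ ≤ ∑ y ∈ E i, (ε / 2 * c i y + (|C| + |L|) * if y ∈ F then c i y else 0) :=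
        sum_le_sum fun y _ => hpoint y
    _ ≤ ε / 2 + (|C| + |L|) * ∑ y ∈ F, c i y := by
        rw [sum_add_distrib, ← mul_sum, hi, mul_one, ← mul_sum, sum_ite_mem]
        gcongr
        · exact fun y _ _ => hc i y
        · exact inter_subset_right
    _ < ε := by linarith

theorem eq_one_of_tendsto_green_div_green {S : Type*} [DecidableEq S] {q : S → S → ℝ}
    (hq : IsSubstochastic q) (hrow : ∀ j, ∑' k, q j k = 1)
    (htrans : ∀ j k, Summable fun n => iterK q n j k) (hirr : ∀ j k, ∃ n, 0 < iterK q n j k)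
    {o x : S} {L : ℝ} (hL : Tendsto (fun k => green q x k / green q o k) cofinite (𝓝 L)) :
    L = 1 := by
  have hG : ∀ k, 0 < green q o k := fun k =>
    (hirr o k).elim fun n hn => green_pos hq htrans hn
  obtain ⟨m, hm⟩ := hirr o x
  have hK : ∀ k, |green q x k / green q o k| ≤ (iterK q m o x)⁻¹ := fun k => by
    rw [abs_of_nonneg (div_nonneg (green_nonneg hq x k) (hG k).le), div_le_iff₀ (hG k),
      inv_mul_eq_div, le_div_iff₀ hm, mul_comm]
    exact iterK_mul_green_le hq htrans m o x k
  have hsum {E : Finset S} {z : S} (hz : {z} ≤ E) := sum_green_mul_escapeProb hq hrow htrans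
    (singleton_subset_iff.1 hz)
  have hlim := tendsto_sum_mul_of_tendsto_cofinite hL hK (E := id) (l := atTop)
    (c := fun E y => green q o y * escapeProb q E y)
    (fun E y => mul_nonneg (hG y).le (escapeProb_nonneg hq y))
    ((eventually_ge_atTop {o}).mono fun E hE => hsum hE)
    (fun y => by simpa using (tendsto_escapeProb_atTop hq hrow y).const_mul (green q o y))
  refine tendsto_nhds_unique hlim (tendsto_const_nhds.congr' ?_)
  filter_upwards [eventually_ge_atTop {x}] with E hE
  rw [← hsum hE]
  exact sum_congr rfl fun y _ => by field_simp [(hG y).ne']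

section Origin

variable {p : ℕ × ℕ → ℕ × ℕ → ℝ}

theorem IsSubstochastic.killK (hp : IsSubstochastic p) : IsSubstochastic (killK p) :=
  hp.of_le (fun j k => by unfold _root_.killK; split_ifs <;> simp [hp.nonneg j k])
    fun j k => by unfold _root_.killK; split_ifs <;> simp [hp.nonneg j k]

/-- `firstHitProb p n j = P_j(τ₀ = n + 1)`. -/
noncomputable def firstHitProb (p : ℕ × ℕ → ℕ × ℕ → ℝ) (n : ℕ) (j : ℕ × ℕ) : ℝ :=
  ∑' l, iterK (killK p) n j l * p l (0, 0)

theorem tsum_mul_eq_tsum_mul_killK_add (a : ℕ × ℕ → ℝ) (x : ℕ × ℕ) :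
    ∑' l, a l * p l x =
      ∑' l, a l * killK p l x + if x = (0, 0) then ∑' l, a l * p l (0, 0) else 0 := by
  by_cases hx : x = (0, 0) <;> simp [killK, hx]

theorem iterK_succ_eq_killK_add (hp : IsSubstochastic p) (n : ℕ) (j x : ℕ × ℕ) :
    iterK p (n + 1) j x = iterK (killK p) (n + 1) j x +
      ∑ ab ∈ antidiagonal n, firstHitProb p ab.1 j * iterK p ab.2 (0, 0) x := by
  induction n generalizing x with
  | zero =>
    rw [iterK_succ, tsum_mul_eq_tsum_mul_killK_add]
    simp [iterK_zero, iterK_one, firstHitProb, eq_comm]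
  | succ n ih =>
    have hrow : ∀ {r : ℕ × ℕ → ℕ × ℕ → ℝ}, IsSubstochastic r → ∀ m i,
        Summable fun l => iterK r m i l * p l x := fun hr m i =>
      Summable.mul_of_abs_le ((hr.iterK m).summable i) fun l => hp.abs_le_one l x
    calc iterK p (n + 2) j x = ∑' l, (iterK (killK p) (n + 1) j l * p l x +
          ∑ ab ∈ antidiagonal n, firstHitProb p ab.1 j * (iterK p ab.2 (0, 0) l * p l x)) := by
          rw [iterK_succ]
          simp_rw [ih, add_mul, sum_mul, mul_assoc]
      _ = ∑' l, iterK (killK p) (n + 1) j l * p l x +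
          ∑ ab ∈ antidiagonal n, firstHitProb p ab.1 j * iterK p (ab.2 + 1) (0, 0) x := by
          rw [(hrow hp.killK _ _).tsum_add (summable_sum fun ab _ => (hrow hp _ _).mul_left _),
            Summable.tsum_finsetSum fun ab _ => (hrow hp _ _).mul_left _]
          simp_rw [tsum_mul_left, iterK_succ]
      _ = _ := by
          rw [tsum_mul_eq_tsum_mul_killK_add, ← iterK_succ, Nat.sum_antidiagonal_succ']
          by_cases hx : x = (0, 0)
          · simp [hx, iterK_zero, firstHitProb, add_assoc]
          · simp [hx, iterK_zero, Ne.symm hx]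

theorem hitProb_eq_tsum_firstHitProb (j : ℕ × ℕ) : hitProb p j = ∑' n, firstHitProb p n j := by
  simp only [hitProb, firstHitProb]

theorem firstHitProb_nonneg (hp : IsSubstochastic p) (n : ℕ) (j : ℕ × ℕ) :
    0 ≤ firstHitProb p n j :=
  tsum_nonneg fun l => mul_nonneg ((hp.killK.iterK n).nonneg j l) (hp.nonneg l _)

theorem sum_antidiagonal_firstHitProb_mul_nonneg (hp : IsSubstochastic p) (n : ℕ) (j y : ℕ × ℕ) :
    0 ≤ ∑ ab ∈ antidiagonal n, firstHitProb p ab.1 j * iterK p ab.2 (0, 0) y :=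
  sum_nonneg fun _ _ => mul_nonneg (firstHitProb_nonneg hp _ j) ((hp.iterK _).nonneg _ _)

theorem firstHitProb_le (hp : IsSubstochastic p) (n : ℕ) (j : ℕ × ℕ) :
    firstHitProb p n j ≤ iterK p (n + 1) j (0, 0) :=
  calc firstHitProb p n j = firstHitProb p (n, 0).1 j * iterK p (n, 0).2 (0, 0) (0, 0) := by
        simp [iterK_zero]
    _ ≤ ∑ ab ∈ antidiagonal n, firstHitProb p ab.1 j * iterK p ab.2 (0, 0) (0, 0) :=
        single_le_sum (fun _ _ => mul_nonneg (firstHitProb_nonneg hp _ j)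
          ((hp.iterK _).nonneg _ _)) (by simp)
    _ ≤ iterK p (n + 1) j (0, 0) := by
        rw [iterK_succ_eq_killK_add hp]
        linarith [(hp.killK.iterK (n + 1)).nonneg j (0, 0)]

theorem iterK_killK_le (hp : IsSubstochastic p) (n : ℕ) (j x : ℕ × ℕ) :
    iterK (killK p) n j x ≤ iterK p n j x := by
  cases n with
  | zero => exact le_rfl
  | succ n =>
    rw [iterK_succ_eq_killK_add hp]
    linarith [sum_antidiagonal_firstHitProb_mul_nonneg hp n j x]

theorem GreenG_eq_Greeng_add_hitProb_mul (hp : IsSubstochastic p)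
    (htrans : ∀ j k, Summable fun n => iterK p n j k) (j x : ℕ × ℕ) :
    GreenG p j x = Greeng p j x + hitProb p j * GreenG p (0, 0) x := by
  have hF : Summable (firstHitProb p · j) :=
    ((summable_nat_add_iff 1).2 (htrans j (0, 0))).of_nonneg_of_le
      (firstHitProb_nonneg hp · j) (firstHitProb_le hp · j)
  have hg : Summable (iterK (killK p) · j x) :=
    (htrans j x).of_nonneg_of_le (fun n => (hp.killK.iterK n).nonneg j x)
      (iterK_killK_le hp · j x)
  have hg' : Summable fun n => iterK (killK p) (n + 1) j x := (summable_nat_add_iff 1).2 hg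
  have hconv : Summable fun n =>
      ∑ ab ∈ antidiagonal n, firstHitProb p ab.1 j * iterK p ab.2 (0, 0) x :=
    (((summable_nat_add_iff 1).2 (htrans j x)).sub hg').congr fun n => by
      simp only [iterK_succ_eq_killK_add hp, add_sub_cancel_left]
  unfold GreenG Greeng
  rw [hitProb_eq_tsum_firstHitProb, (htrans j x).tsum_eq_zero_add, hg.tsum_eq_zero_add,
    tsum_mul_tsum_eq_tsum_sum_antidiagonal_of_summable_norm hF.norm (htrans _ _).norm]
  simp_rw [iterK_succ_eq_killK_add hp]
  rw [hg'.tsum_add hconv, add_assoc]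
  rfl

theorem Greeng_origin_origin : Greeng p (0, 0) (0, 0) = 1 := by
  rw [Greeng, tsum_eq_single 0 fun n hn => ?_]
  · simp [iterK_zero]
  · obtain ⟨m, rfl⟩ := Nat.exists_eq_succ_of_ne_zero hn
    simp [iterK_succ, killK]

theorem one_sub_hitProb_mul_GreenG (hp : IsSubstochastic p)
    (htrans : ∀ j k, Summable fun n => iterK p n j k) :
    (1 - hitProb p (0, 0)) * GreenG p (0, 0) (0, 0) = 1 := by
  have := GreenG_eq_Greeng_add_hitProb_mul hp htrans (0, 0) (0, 0)
  rw [Greeng_origin_origin] at this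
  linarith

theorem GreenG_div_GreenG_eq (hp : IsSubstochastic p)
    (htrans : ∀ j k, Summable fun n => iterK p n j k) {j k : ℕ × ℕ}
    (hk : GreenG p (0, 0) k ≠ 0) :
    GreenG p j k / GreenG p (0, 0) k =
      (1 - hitProb p (0, 0)) * (Greeng p j k / Greeng p (0, 0) k) + hitProb p j := by
  have h0 : 1 - hitProb p (0, 0) ≠ 0 :=
    left_ne_zero_of_mul_eq_one (one_sub_hitProb_mul_GreenG hp htrans)
  have hg0 : Greeng p (0, 0) k = (1 - hitProb p (0, 0)) * GreenG p (0, 0) k := by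
    linarith [GreenG_eq_Greeng_add_hitProb_mul hp htrans (0, 0) k]
  rw [GreenG_eq_Greeng_add_hitProb_mul hp htrans j k, hg0]
  field_simp

end Origin

theorem martin_kernel_limit_is_one_general
    (p : ℕ × ℕ → ℕ × ℕ → ℝ) (κ : ℕ × ℕ → ℝ)
    (hnn : ∀ j k, 0 ≤ p j k) (hrow : ∀ j, ∑' k : ℕ × ℕ, p j k = 1)
    (hirr : ∀ j k, ∃ n, 0 < iterK p n j k)
    (htrans : ∀ j k, Summable (fun n : ℕ => iterK p n j k))
    (hlim : ∀ j, Tendsto (fun k : ℕ × ℕ => Greeng p j k / Greeng p (0, 0) k)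
      cofinite (nhds (κ j / κ (0, 0)))) :
    (∀ j, (1 - hitProb p (0, 0)) * (κ j / κ (0, 0)) + hitProb p j = 1) ∧
    (∀ j, Tendsto (fun k : ℕ × ℕ => GreenG p j k / GreenG p (0, 0) k)
      cofinite (nhds 1)) := by
  have hp : IsSubstochastic p := .of_tsum_eq_one hnn hrow
  have hkernel : ∀ j, Tendsto (fun k => GreenG p j k / GreenG p (0, 0) k) cofinite
      (𝓝 ((1 - hitProb p (0, 0)) * (κ j / κ (0, 0)) + hitProb p j)) := fun j =>
    (((hlim j).const_mul _).add_const _).congr fun k =>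
      (GreenG_div_GreenG_eq hp htrans
        ((hirr (0, 0) k).elim fun _ hn => (green_pos hp htrans hn).ne')).symm
  have hone : ∀ j, (1 - hitProb p (0, 0)) * (κ j / κ (0, 0)) + hitProb p j = 1 := fun j =>
    eq_one_of_tendsto_green_div_green hp hrow htrans hirr (hkernel j)
  exact ⟨hone, fun j => hone j ▸ hkernel j⟩

/-- If the Martin kernel of the killed chain converges to `κ(j)/κ(0)` as `‖k‖ → ∞` and the
only nonnegative harmonic functions of the (transient, irreducible, stochastic) chain are
the constants, then `P₀(τ₀=∞)·κ(j)/κ(0) + P_j(τ₀<∞) = 1` and `G(j,k)/G(0,k) → 1`. -/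
theorem martin_kernel_limit_is_one
    (p : ℕ × ℕ → ℕ × ℕ → ℝ) (κ : ℕ × ℕ → ℝ)
    (hnn : ∀ j k, 0 ≤ p j k) (hrow : ∀ j, ∑' k : ℕ × ℕ, p j k = 1)
    (hirr : ∀ j k, ∃ n, 0 < iterK p n j k)
    (htrans : ∀ j k, Summable (fun n : ℕ => iterK p n j k))
    (hκ0 : 0 < κ (0, 0))
    (hlim : ∀ j, Tendsto (fun k : ℕ × ℕ => Greeng p j k / Greeng p (0, 0) k)
      cofinite (nhds (κ j / κ (0, 0))))
    (hLiouville : ∀ h : ℕ × ℕ → ℝ, (∀ j, 0 ≤ h j) →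
      (∀ j, ∑' k : ℕ × ℕ, p j k * h k = h j) → ∃ cst : ℝ, ∀ j, h j = cst) :
    (∀ j, (1 - hitProb p (0, 0)) * (κ j / κ (0, 0)) + hitProb p j = 1) ∧
    (∀ j, Tendsto (fun k : ℕ × ℕ => GreenG p j k / GreenG p (0, 0) k)
      cofinite (nhds 1)) :=
  martin_kernel_limit_is_one_general p κ hnn hrow hirr htrans hlim
end
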